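/- arXiv:math/0101216 — 10 statements merged into one kernel-verified Lean document; each statement's English description precedes it below -/
import Mathlib

section
/- Let (b_n)_{n≥0} be a sequence of positive reals and define [0] = 0, [n] = b_{n-1}²/b_0² for n ≥ 1, [n]! = [1][2]⋯[n], [2m-1]!! = [1][3]⋯[2m-1], the nested-sum coefficients α_{2m-1,n-1} = Σ_{k₁=2m-1}^{n-1} [k₁] Σ_{k₂=2m-3}^{k₁-2} [k₂] ⋯ Σ_{k_m=1}^{k_{m-1}-2} [k_m] for 1 ≤ m ≤ ⌊n/2⌋ with α_{-1,n-1} = 1, and the polynomials ψ_n(x) = Σ_{m=0}^{⌊n/2⌋} ((-1)^m/√([n]!)) b_0^{2m-n} α_{2m-1,n-1} x^{n-2m}. Then there exist a sequence (v_n)_{n≥0} with 1 = v_0 ≤ v_1 ≤ v_2 ≤ ⋯ and a real sequence (γ_n)_{n≥1} such that D_v ψ_0 = 0 and D_v ψ_n = γ_n ψ_{n-1} for all n ≥ 1, if and only if there exists a sequence (v_n)_{n≥0} with 1 = v_0 ≤ v_1 ≤ v_2 ≤ ⋯ such that (i) with the convention v_{-1} = 0, for all n ≥ 2 and all p ≥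 1 with 2p ≤ n one has v_{n-2} v_{2p-1} + v_{2p-3} v_{n-2p} = v_n v_{2p-3} + v_{2p-1} v_{n-2p}, and (ii) α_{2m-1,n-1} = [2m-1]!! · (v_{n-1})! / ((v_{2m-1})! (v_{n-2m-1})!) for all n ≥ 1 and 2m ≤ n, where (v_k)! = v_0 v_1 ⋯ v_k and (v_{-1})! = (v_0)! = 1. Moreover, in this case the relations D_v ψ_n = γ_n ψ_{n-1} hold with γ_n = √(v_1 v_{n-1} / (b_0² (v_n − v_{n-2}))) for n ≥ 1. -/
open Polynomial Finset

/-- The coefficient sequence `(ε_k)` associated with a sequence `v`: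
`ε_1 = 1` and, for `k ≥ 2`, `ε_k = v_{k-1}/k! − ∑_{j=1}^{k-1} ε_j/(k−j)!`
(with the junk value `ε_0 = 0`). -/
noncomputable def eps (v : ℕ → ℝ) : ℕ → ℝ
  | 0 => 0
  | 1 => 1
  | k + 2 =>
      v (k + 1) / (Nat.factorial (k + 2) : ℝ) -
        ∑ j ∈ (Finset.Icc 1 (k + 1)).attach,
          eps v j.1 / (Nat.factorial (k + 2 - j.1) : ℝ)
decreasing_by
  have hj := j.2
  simp only [Finset.mem_Icc] at hj
  omega

/-- The generalized derivation operator `D_v` acting on real polynomials: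
`D_v p (x) = ∑_{k ≥ 1} ε_k x^{k-1} p^{(k)}(x)` (a finite sum on each polynomial). -/
noncomputable def Dv (ε : ℕ → ℝ) (p : Polynomial ℝ) : Polynomial ℝ :=
  ∑ k ∈ Finset.Icc 1 p.natDegree, C (ε k) * X ^ (k - 1) * derivative^[k] p

/-- The nested-sum coefficients: `alphaC w m N` is `α_{2m-1, N}`, i.e.
`α_{2m-1,n-1} = ∑_{k₁=2m-1}^{n-1} w_{k₁} ∑_{k₂=2m-3}^{k₁-2} w_{k₂} ⋯ ∑_{k_m=1}^{k_{m-1}-2} w_{k_m}`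
with `α_{-1,N} = 1` and empty sums equal to `0`. -/
noncomputable def alphaC (w : ℕ → ℝ) : ℕ → ℕ → ℝ
  | 0, _ => 1
  | m + 1, N => ∑ k ∈ Finset.Icc (2 * m + 1) N, w k * alphaC w m (k - 2)

/-- Extension of a sequence `v : ℕ → ℝ` to integer indices by `0`
(the convention `v_{-1} = 0`). -/
noncomputable def vext (v : ℕ → ℝ) : ℤ → ℝ := fun n => if 0 ≤ n then v n.toNat else 0

/-- The brackets `[0] = 0`, `[n] = b_{n-1}²/b_0²` for `n ≥ 1`. -/
noncomputable def br (b : ℕ → ℝ) : ℕ → ℝ :=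
  fun n => if n = 0 then 0 else b (n - 1) ^ 2 / b 0 ^ 2

/-- The polynomials
`ψ_n(x) = ∑_{m=0}^{⌊n/2⌋} ((-1)^m/√([n]!)) b_0^{2m-n} α_{2m-1,n-1} x^{n-2m}`,
where `[n]! = [1][2]⋯[n]`. -/
noncomputable def psiP (b : ℕ → ℝ) (n : ℕ) : Polynomial ℝ :=
  ∑ m ∈ Finset.range (n / 2 + 1),
    C ((-1 : ℝ) ^ m / Real.sqrt (∏ k ∈ Finset.Icc 1 n, br b k) *
        b 0 ^ (2 * (m : ℤ) - (n : ℤ)) * alphaC (br b) m (n - 1)) * X ^ (n - 2 * m)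

/-!
The recursion defining `ε` says exactly that `∑_k ε_k N!/(N-k)! = v_{N-1}`, i.e. that `D_v` acts on
monomials by `D_v x^N = v_{N-1} x^{N-1}`. Comparing coefficients of `x^{n-1-2m}`, the relation
`D_v ψ_n = γ_n ψ_{n-1}` therefore amounts to `γ_n b_0 √[n] = v_{n-1}` (the case `m = 0`) together with
the shift recursion `α_{2m-1,n-1} v_{n-1-2m} = v_{n-1} α_{2m-1,n-2}`, and the latter is equivalent to the
closed form (ii), by induction on `n` from `α_{2m-1,2m-1} = [1][3]⋯[2m-1]`.

Conversely, substituting (ii) into Pascal's rule `α_{2m+1,N} = α_{2m+1,N-1} + [N] α_{2m-1,N-2}` gives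
`[2m+1] v_{N-1} (v_N - v_{N-2m-2}) = [N] v_{2m} v_{2m+1}`. Its case `m = 0` expresses every `[k]`
through `v` (which yields the value of `γ_n`), and eliminating `[2m+1]` and `[N]` with it leaves (i).
-/
theorem Dv_eq_sum_Icc (ε : ℕ → ℝ) {p : ℝ[X]} {M : ℕ} (h : p.natDegree ≤ M) :
    Dv ε p = ∑ k ∈ Icc 1 M, C (ε k) * X ^ (k - 1) * derivative^[k] p := by
  refine sum_subset (Icc_subset_Icc_right h) fun k hkM hk => ?_
  rw [mem_Icc] at hkM
  rw [iterate_derivative_eq_zero (by simp_all), mul_zero]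

theorem Dv_C (ε : ℕ → ℝ) (a : ℝ) : Dv ε (C a) = 0 := by
  simp [Dv]

theorem X_pow_mul_iterate_derivative_X_pow {R : Type*} [CommSemiring R] {k : ℕ} (hk : 1 ≤ k)
    (N : ℕ) : (X : R[X]) ^ (k - 1) * derivative^[k] (X ^ N) =
      C (N.descFactorial k : R) * X ^ (N - 1) := by
  rw [iterate_derivative_X_pow_eq_C_mul]
  rcases le_or_gt k N with hkN | hNk
  · rw [mul_left_comm, ← pow_add, show k - 1 + (N - k) = N - 1 by omega]
  · simp [Nat.descFactorial_eq_zero_iff_lt.2 hNk]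

theorem sum_Icc_mul_descFactorial_of_le {N M : ℕ} (h : N ≤ M) (f : ℕ → ℝ) :
    ∑ k ∈ Icc 1 M, f k * N.descFactorial k = ∑ k ∈ Icc 1 N, f k * N.descFactorial k :=
  (sum_subset (Icc_subset_Icc_right h) fun k hkM hk => by
    simp_all [Nat.descFactorial_eq_zero_iff_lt]).symm

theorem Dv_sum_C_mul_X_pow {ι : Type*} (ε : ℕ → ℝ) (s : Finset ι) (c : ι → ℝ) (e : ι → ℕ) :
    Dv ε (∑ i ∈ s, C (c i) * X ^ e i) =
      ∑ i ∈ s, C (c i * ∑ k ∈ Icc 1 (e i), ε k * (e i).descFactorial k) * X ^ (e i - 1) := by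
  rw [Dv_eq_sum_Icc ε (M := s.sup e) (natDegree_sum_le_of_forall_le _ _ fun i hi =>
    (natDegree_C_mul_X_pow_le _ _).trans (le_sup hi))]
  simp_rw [iterate_derivative_sum, iterate_derivative_C_mul, Finset.mul_sum (s := s)]
  rw [sum_comm]
  refine sum_congr rfl fun i hi => ?_
  rw [← sum_Icc_mul_descFactorial_of_le (le_sup hi), mul_sum, map_sum, sum_mul]
  refine sum_congr rfl fun k hk => ?_
  rw [mul_left_comm, mul_assoc, X_pow_mul_iterate_derivative_X_pow (mem_Icc.1 hk).1]
  simp only [map_mul, map_natCast]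
  ring

theorem eps_add_two (v : ℕ → ℝ) (k : ℕ) :
    eps v (k + 2) = v (k + 1) / (k + 2).factorial -
      ∑ j ∈ Icc 1 (k + 1), eps v j / (k + 2 - j).factorial := by
  rw [eps, sum_attach (Icc 1 (k + 1)) fun j => eps v j / ((k + 2 - j).factorial : ℝ)]

theorem sum_eps_div_factorial {v : ℕ → ℝ} (hv0 : v 0 = 1) (N : ℕ) :
    ∑ k ∈ Icc 1 (N + 1), eps v k / (N + 1 - k).factorial = v N / (N + 1).factorial := by
  cases N with
  | zero => simp [eps, hv0]
  | succ K => rw [sum_Icc_succ_top (by omega), eps_add_two]; simp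

theorem sum_eps_mul_descFactorial {v : ℕ → ℝ} (hv0 : v 0 = 1) (N : ℕ) :
    ∑ k ∈ Icc 1 (N + 1), eps v k * (N + 1).descFactorial k = v N := by
  have hfac : ((N + 1).factorial : ℝ) ≠ 0 := by positivity
  rw [← div_mul_cancel₀ (v N) hfac, ← sum_eps_div_factorial hv0, sum_mul]
  refine sum_congr rfl fun k hk => ?_
  rw [← Nat.factorial_mul_descFactorial (mem_Icc.1 hk).2, Nat.cast_mul]
  field_simp

theorem sum_range_C_mul_X_pow_sub_two_mul_eq_iff {R : Type*} [Semiring R] (N : ℕ)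
    (x y : ℕ → R) :
    ∑ m ∈ range (N / 2 + 1), C (x m) * X ^ (N - 2 * m) =
        ∑ m ∈ range (N / 2 + 1), C (y m) * X ^ (N - 2 * m) ↔
      ∀ m, 2 * m ≤ N → x m = y m := by
  have hcoeff : ∀ (z : ℕ → R) m, 2 * m ≤ N →
      (∑ m' ∈ range (N / 2 + 1), C (z m') * X ^ (N - 2 * m')).coeff (N - 2 * m) = z m := by
    intro z m hm
    rw [finsetSum_coeff, sum_eq_single_of_mem m (mem_range.2 (by omega)), coeff_C_mul_X_pow,
      if_pos rfl]
    intro m' hm' hne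
    rw [mem_range] at hm'
    rw [coeff_C_mul_X_pow, if_neg (by omega)]
  refine ⟨fun h m hm => ?_, fun h => sum_congr rfl fun m hm => ?_⟩
  · rw [← hcoeff x m hm, h, hcoeff y m hm]
  · rw [h m (by rw [mem_range] at hm; omega)]

section Psi

variable {b : ℕ → ℝ}

theorem br_pos (hb : ∀ n, 0 < b n) {k : ℕ} (hk : k ≠ 0) : 0 < br b k := by
  have := hb (k - 1)
  have := hb 0
  rw [br, if_neg hk]
  positivity

theorem br_one (hb : ∀ n, 0 < b n) : br b 1 = 1 := by
  simp [br, (hb 0).ne']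

noncomputable def psiScale (b : ℕ → ℝ) (n m : ℕ) : ℝ :=
  (-1 : ℝ) ^ m / √(∏ k ∈ Icc 1 n, br b k) * b 0 ^ (2 * (m : ℤ) - (n : ℤ))

theorem psiP_eq_sum (b : ℕ → ℝ) (n : ℕ) :
    psiP b n = ∑ m ∈ range (n / 2 + 1),
      C (psiScale b n m * alphaC (br b) m (n - 1)) * X ^ (n - 2 * m) :=
  rfl

theorem psiScale_ne_zero (hb : ∀ n, 0 < b n) (n m : ℕ) : psiScale b n m ≠ 0 := by
  have : 0 < ∏ k ∈ Icc 1 n, br b k :=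
    prod_pos fun k hk => br_pos hb (by rw [mem_Icc] at hk; omega)
  have := hb 0
  unfold psiScale
  positivity

theorem psiScale_succ (hb : ∀ n, 0 < b n) (n m : ℕ) :
    psiScale b (n + 1) m = psiScale b n m / (b 0 * √(br b (n + 1))) := by
  have hprod : 0 ≤ ∏ k ∈ Icc 1 n, br b k :=
    prod_nonneg fun k hk => (br_pos hb (by rw [mem_Icc] at hk; omega)).le
  have := hb 0
  have := br_pos hb n.succ_ne_zero
  unfold psiScale
  rw [prod_Icc_succ_top (by omega), Real.sqrt_mul hprod, Nat.cast_succ,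
    show 2 * (m : ℤ) - (n + 1) = 2 * m - n - 1 by ring, zpow_sub_one₀ (hb 0).ne']
  field_simp

theorem Dv_psiP_zero (ε : ℕ → ℝ) : Dv ε (psiP b 0) = 0 := by
  simp [psiP, Dv_C]

theorem Dv_psiP_succ {v : ℕ → ℝ} (hv0 : v 0 = 1) (N : ℕ) :
    Dv (eps v) (psiP b (N + 1)) = ∑ m ∈ range (N / 2 + 1),
      C (psiScale b (N + 1) m * alphaC (br b) m N * v (N - 2 * m)) * X ^ (N - 2 * m) := by
  rw [psiP_eq_sum, Dv_sum_C_mul_X_pow]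
  refine (sum_subset (range_subset_range.2 (by omega)) fun m hm hmN => ?_).symm.trans
    (sum_congr rfl fun m hm => ?_)
  · rw [mem_range] at hm hmN
    rw [show N + 1 - 2 * m = 0 by omega]
    simp
  · rw [mem_range] at hm
    rw [show N + 1 - 2 * m = N - 2 * m + 1 by omega, sum_eps_mul_descFactorial hv0,
      Nat.add_sub_cancel, Nat.add_sub_cancel]

theorem Dv_psiP_succ_eq_iff {v : ℕ → ℝ} (hb : ∀ n, 0 < b n) (hv0 : v 0 = 1) (N : ℕ) (γ : ℝ) :
    Dv (eps v) (psiP b (N + 1)) = C γ * psiP b N ↔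
      ∀ m, 2 * m ≤ N → alphaC (br b) m N * v (N - 2 * m) =
        γ * (b 0 * √(br b (N + 1))) * alphaC (br b) m (N - 1) := by
  rw [Dv_psiP_succ hv0, psiP_eq_sum b N, mul_sum]
  simp_rw [← mul_assoc, ← C_mul]
  rw [sum_range_C_mul_X_pow_sub_two_mul_eq_iff]
  refine forall₂_congr fun m _ => ?_
  have hs := psiScale_ne_zero hb N m
  have hd : b 0 * √(br b (N + 1)) ≠ 0 := by
    have := hb 0
    have := br_pos hb N.succ_ne_zero
    positivity
  rw [psiScale_succ hb, div_mul_eq_mul_div, div_mul_eq_mul_div, div_eq_iff hd]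
  constructor <;> intro h
  · apply mul_left_cancel₀ hs
    linear_combination h
  · linear_combination psiScale b N m * h

end Psi

section Alpha

variable {w v : ℕ → ℝ}

theorem alphaC_succ_of_le {m N : ℕ} (h : 2 * m + 1 ≤ N) :
    alphaC w (m + 1) N = alphaC w (m + 1) (N - 1) + w N * alphaC w m (N - 2) := by
  obtain ⟨K, rfl⟩ := Nat.exists_eq_add_of_le' (show 1 ≤ N by omega)
  rw [alphaC, alphaC, sum_Icc_succ_top (by omega), Nat.add_sub_cancel, Nat.add_sub_add_right]

theorem alphaC_two_mul_sub_one (w : ℕ → ℝ) (m : ℕ) :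
    alphaC w m (2 * m - 1) = ∏ j ∈ range m, w (2 * j + 1) := by
  induction m with
  | zero => rfl
  | succ m ih =>
    rw [alphaC, show 2 * (m + 1) - 1 = 2 * m + 1 by omega, Icc_self, sum_singleton,
      show 2 * m + 1 - 2 = 2 * m - 1 by omega, ih, prod_range_succ, mul_comm]

/-- Condition (ii), with `w k = [k]`. -/
def AlphaClosedForm (w v : ℕ → ℝ) : Prop :=
  ∀ n m : ℕ, 1 ≤ n → 2 * m ≤ n →
    alphaC w m (n - 1) =
      (∏ j ∈ range m, w (2 * j + 1)) * (∏ i ∈ range n, v i) /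
        ((∏ i ∈ range (2 * m), v i) * (∏ i ∈ range (n - 2 * m), v i))

def AlphaShift (w v : ℕ → ℝ) : Prop :=
  ∀ N m : ℕ, 2 * m ≤ N → alphaC w m N * v (N - 2 * m) = v N * alphaC w m (N - 1)

theorem alphaClosedForm_iff_alphaShift (hv : ∀ i, 0 < v i) :
    AlphaClosedForm w v ↔ AlphaShift w v := by
  have hprod : ∀ n, ∏ i ∈ range n, v i ≠ 0 := fun n => (prod_pos fun i _ => hv i).ne'
  constructor
  · intro hA N m hm
    rcases Nat.eq_zero_or_pos N with rfl | hN
    · obtain rfl : m = 0 := by omega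
      simp [alphaC]
    have hsucc : alphaC w m N = _ := hA (N + 1) m (by omega) (by omega)
    rw [hsucc, hA N m hN hm, show N + 1 - 2 * m = N - 2 * m + 1 by omega, prod_range_succ, prod_range_succ]
    have := hprod (2 * m)
    have := hprod (N - 2 * m)
    have := (hv (N - 2 * m)).ne'
    field_simp
  · rintro hrec n m - hm
    induction n, hm using Nat.le_induction with
    | base =>
      rw [alphaC_two_mul_sub_one, Nat.sub_self, range_zero, prod_empty, mul_one,
        mul_div_assoc, div_self (hprod _), mul_one]
    | succ n hmn ih =>
      have := hprod (2 * m)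
      have := hprod (n - 2 * m)
      have := (hv (n - 2 * m)).ne'
      rw [Nat.add_sub_cancel, eq_div_of_mul_eq (hv (n - 2 * m)).ne' (hrec n m hmn), ih,
        show n + 1 - 2 * m = n - 2 * m + 1 by omega, prod_range_succ, prod_range_succ]
      field_simp

theorem AlphaClosedForm.weight_relation (hw : ∀ j, w (2 * j + 1) ≠ 0) (hv : ∀ i, 0 < v i)
    (hA : AlphaClosedForm w v) (m K : ℕ) :
    w (2 * m + 1) * v (K + 2 * m + 1) * (v (K + 2 * m + 2) - v K) =
      w (K + 2 * m + 2) * (v (2 * m) * v (2 * m + 1)) := by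
  have h1 : alphaC w (m + 1) (K + 2 * m + 2) = _ := hA (K + 2 * m + 3) (m + 1) (by omega) (by omega)
  have h2 : alphaC w (m + 1) (K + 2 * m + 1) = _ := hA (K + 2 * m + 2) (m + 1) (by omega) (by omega)
  have h3 : alphaC w m (K + 2 * m) = _ := hA (K + 2 * m + 1) m (by omega) (by omega)
  have hP := alphaC_succ_of_le (w := w) (m := m) (N := K + 2 * m + 2) (by omega)
  rw [h1, show K + 2 * m + 2 - 1 = K + 2 * m + 1 by omega, h2,
    show K + 2 * m + 2 - 2 = K + 2 * m by omega, h3,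
    show K + 2 * m + 3 - 2 * (m + 1) = K + 1 by omega,
    show K + 2 * m + 2 - 2 * (m + 1) = K by omega,
    show K + 2 * m + 1 - 2 * m = K + 1 by omega,
    show 2 * (m + 1) = 2 * m + 1 + 1 by ring] at hP
  simp only [prod_range_succ] at hP
  have hD : ∏ j ∈ range m, w (2 * j + 1) ≠ 0 := prod_ne_zero_iff.2 fun j _ => hw j
  have hprod : ∀ n, ∏ i ∈ range n, v i ≠ 0 := fun n => (prod_pos fun i _ => hv i).ne'
  have := hprod (K + 2 * m)
  have := (hv (K + 2 * m)).ne'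
  have := hprod K
  have := hprod (2 * m)
  have := (hv K).ne'
  have := (hv (2 * m)).ne'
  have := (hv (2 * m + 1)).ne'
  field_simp at hP
  linear_combination hP

theorem vext_natCast (v : ℕ → ℝ) (k : ℕ) : vext v k = v k := by
  simp [vext]

theorem vext_neg_one (v : ℕ → ℝ) : vext v (-1) = 0 := by
  simp [vext]

theorem AlphaClosedForm.weight_succ_mul (hw : ∀ j, w (2 * j + 1) ≠ 0) (hv : ∀ i, 0 < v i)
    (hA : AlphaClosedForm w v) (k : ℕ) :
    w (k + 1) * (v 0 * v 1) = w 1 * (v k * (v (k + 1) - vext v (k - 1))) := by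
  cases k with
  | zero =>
    rw [Nat.cast_zero, zero_sub, vext_neg_one]
    ring
  | succ K =>
    have h := hA.weight_relation hw hv 0 K
    simp only [mul_zero, add_zero, zero_add] at h
    rw [Nat.cast_succ, add_sub_cancel_right, vext_natCast]
    linear_combination -h

theorem AlphaClosedForm.vext_identity (hw : ∀ j, w (2 * j + 1) ≠ 0) (hv : ∀ i, 0 < v i)
    (hA : AlphaClosedForm w v) (n p : ℤ) (hn : 2 ≤ n) (hp : 1 ≤ p) (hnp : 2 * p ≤ n) :
    vext v (n - 2) * vext v (2 * p - 1) + vext v (2 * p - 3) * vext v (n - 2 * p) =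
      vext v n * vext v (2 * p - 3) + vext v (2 * p - 1) * vext v (n - 2 * p) := by
  obtain ⟨m, rfl⟩ : ∃ m : ℕ, p = m + 1 := ⟨(p - 1).toNat, by omega⟩
  obtain ⟨K, rfl⟩ : ∃ K : ℕ, n = K + 2 * m + 2 := ⟨(n - 2 * m - 2).toNat, by omega⟩
  have hrel := hA.weight_relation hw hv m K
  have hodd := hA.weight_succ_mul hw hv (2 * m)
  have htop := hA.weight_succ_mul hw hv (K + 2 * m + 1)
  rw [show ((K + 2 * m + 1 : ℕ) : ℤ) - 1 = ((K + 2 * m : ℕ) : ℤ) by push_cast; ring,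
    vext_natCast] at htop
  rw [show (K : ℤ) + 2 * m + 2 - 2 = ((K + 2 * m : ℕ) : ℤ) by push_cast; ring,
    show 2 * ((m : ℤ) + 1) - 1 = ((2 * m + 1 : ℕ) : ℤ) by push_cast; ring,
    show 2 * ((m : ℤ) + 1) - 3 = ((2 * m : ℕ) : ℤ) - 1 by push_cast; ring,
    show (K : ℤ) + 2 * m + 2 - 2 * (m + 1) = (K : ℤ) by ring,
    show (K : ℤ) + 2 * m + 2 = ((K + 2 * m + 2 : ℕ) : ℤ) by push_cast; ring]
  simp only [vext_natCast]
  have hw1 : w 1 ≠ 0 := hw 0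
  apply mul_left_cancel₀ (mul_ne_zero (mul_ne_zero hw1 (hv (2 * m)).ne') (hv (K + 2 * m + 1)).ne')
  linear_combination (v 0 * v 1) * hrel - v (K + 2 * m + 1) * (v (K + 2 * m + 2) - v K) * hodd +
    v (2 * m) * v (2 * m + 1) * htop

end Alpha

section DvPsi

variable {b v : ℕ → ℝ}

theorem sqrt_mul_eq_of_alphaClosedForm (hb : ∀ n, 0 < b n) (hv0 : v 0 = 1) (hv : ∀ i, 0 < v i)
    (hA : AlphaClosedForm (br b) v) (N : ℕ) :
    √(v 1 * v N / (b 0 ^ 2 * (v (N + 1) - vext v (((N + 1 : ℕ) : ℤ) - 2)))) *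
      (b 0 * √(br b (N + 1))) = v N := by
  have hw := br_pos hb N.succ_ne_zero
  have := hb 0
  have := hv 1
  have := hv N
  have h := hA.weight_succ_mul (fun j => (br_pos hb (by omega)).ne') hv N
  rw [hv0, br_one hb] at h
  have hd : v (N + 1) - vext v ((N : ℤ) - 1) = v 1 * br b (N + 1) / v N := by
    rw [eq_div_iff (hv N).ne']
    linear_combination -h
  rw [show ((N + 1 : ℕ) : ℤ) - 2 = (N : ℤ) - 1 by push_cast; ring, hd]
  have hsq : v 1 * v N / (b 0 ^ 2 * (v 1 * br b (N + 1) / v N)) =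
      (v N / (b 0 * √(br b (N + 1)))) ^ 2 := by
    rw [div_pow, mul_pow, Real.sq_sqrt hw.le]
    field_simp
  rw [hsq, Real.sqrt_sq (by positivity)]
  field_simp

theorem Dv_psiP_eq_of_alphaClosedForm (hb : ∀ n, 0 < b n) (hv0 : v 0 = 1)
    (hv : ∀ i, 0 < v i) (hA : AlphaClosedForm (br b) v) {n : ℕ} (hn : 1 ≤ n) :
    Dv (eps v) (psiP b n) =
      C (√(v 1 * v (n - 1) / (b 0 ^ 2 * (v n - vext v ((n : ℤ) - 2))))) * psiP b (n - 1) := by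
  obtain ⟨N, rfl⟩ := Nat.exists_eq_add_of_le' hn
  rw [Nat.add_sub_cancel, Dv_psiP_succ_eq_iff hb hv0, sqrt_mul_eq_of_alphaClosedForm hb hv0 hv hA]
  exact (alphaClosedForm_iff_alphaShift hv).1 hA N

theorem alphaShift_of_Dv_psiP (hb : ∀ n, 0 < b n) (hv0 : v 0 = 1) {g : ℕ → ℝ}
    (hg : ∀ n, 1 ≤ n → Dv (eps v) (psiP b n) = C (g n) * psiP b (n - 1)) :
    AlphaShift (br b) v := by
  intro N m hm
  have h := (Dv_psiP_succ_eq_iff hb hv0 N (g (N + 1))).1 (hg (N + 1) N.succ_pos)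
  have h0 := h 0 (Nat.zero_le N)
  simp only [alphaC, mul_zero, Nat.sub_zero, one_mul, mul_one] at h0
  rw [h m hm, h0]

end DvPsi

theorem stmt_0 (b : ℕ → ℝ) (hb : ∀ n : ℕ, 0 < b n) :
    ((∃ v : ℕ → ℝ, v 0 = 1 ∧ (∀ n : ℕ, v n ≤ v (n + 1)) ∧
        ∃ g : ℕ → ℝ,
          Dv (eps v) (psiP b 0) = 0 ∧
          ∀ n : ℕ, 1 ≤ n → Dv (eps v) (psiP b n) = C (g n) * psiP b (n - 1)) ↔
      (∃ v : ℕ → ℝ, v 0 = 1 ∧ (∀ n : ℕ, v n ≤ v (n + 1)) ∧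
        (∀ n p : ℤ, 2 ≤ n → 1 ≤ p → 2 * p ≤ n →
          vext v (n - 2) * vext v (2 * p - 1) + vext v (2 * p - 3) * vext v (n - 2 * p) =
            vext v n * vext v (2 * p - 3) + vext v (2 * p - 1) * vext v (n - 2 * p)) ∧
        (∀ n m : ℕ, 1 ≤ n → 2 * m ≤ n →
          alphaC (br b) m (n - 1) =
            (∏ j ∈ Finset.range m, br b (2 * j + 1)) *
              (∏ i ∈ Finset.range n, v i) /
              ((∏ i ∈ Finset.range (2 * m), v i) *
                (∏ i ∈ Finset.range (n - 2 * m), v i))))) ∧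
    (∀ v : ℕ → ℝ, v 0 = 1 → (∀ n : ℕ, v n ≤ v (n + 1)) →
      (∀ n p : ℤ, 2 ≤ n → 1 ≤ p → 2 * p ≤ n →
        vext v (n - 2) * vext v (2 * p - 1) + vext v (2 * p - 3) * vext v (n - 2 * p) =
          vext v n * vext v (2 * p - 3) + vext v (2 * p - 1) * vext v (n - 2 * p)) →
      (∀ n m : ℕ, 1 ≤ n → 2 * m ≤ n →
        alphaC (br b) m (n - 1) =
          (∏ j ∈ Finset.range m, br b (2 * j + 1)) *
            (∏ i ∈ Finset.range n, v i) /
            ((∏ i ∈ Finset.range (2 * m), v i) *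
              (∏ i ∈ Finset.range (n - 2 * m), v i))) →
      ∀ n : ℕ, 1 ≤ n →
        Dv (eps v) (psiP b n) =
          C (Real.sqrt (v 1 * v (n - 1) / (b 0 ^ 2 * (v n - vext v ((n : ℤ) - 2))))) *
            psiP b (n - 1)) := by
  have hpos : ∀ v : ℕ → ℝ, v 0 = 1 → (∀ n, v n ≤ v (n + 1)) → ∀ i, 0 < v i :=
    fun v hv0 hmono i => by linarith [monotone_nat_of_le_succ hmono (Nat.zero_le i)]
  refine ⟨⟨?_, ?_⟩, fun v hv0 hmono _ hA n hn =>
    Dv_psiP_eq_of_alphaClosedForm hb hv0 (hpos v hv0 hmono) hA hn⟩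
  · rintro ⟨v, hv0, hmono, g, -, hg⟩
    have hA : AlphaClosedForm (br b) v :=
      (alphaClosedForm_iff_alphaShift (hpos v hv0 hmono)).2 (alphaShift_of_Dv_psiP hb hv0 hg)
    exact ⟨v, hv0, hmono,
      hA.vext_identity (fun j => (br_pos hb (by omega)).ne') (hpos v hv0 hmono), hA⟩
  · rintro ⟨v, hv0, hmono, -, hA⟩
    exact ⟨v, hv0, hmono, _, Dv_psiP_zero _,
      fun n hn => Dv_psiP_eq_of_alphaClosedForm hb hv0 (hpos v hv0 hmono) hA hn⟩
end

section
/- Let γ > −1 and α > 0, and let ψ_n be the generalized Hermite (Hermite–Chihara) polynomials defined by the three-term recurrence below. Then for every n ≥ 0 and all real x: x² ψ_n''(x) + (γ − 2αx²) x ψ_n'(x) + (2αn x² − θ_n) ψ_n(x) = 0, where θ_n = γ(1 − (−1)^n)/2 (that is, ψ_n satisfies the second-order differential equation x y'' + (γ − 2αx²) y' + (2αnx − θ_n/x) y = 0). -/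
open Polynomial

theorem stmt_2 (γ α : ℝ) (hγ : -1 < γ) (hα : 0 < α) (b : ℕ → ℝ)
    (hb : ∀ n : ℕ, b n = if Even (n + 1) then Real.sqrt (((n : ℝ) + 1) / (2 * α))
                         else Real.sqrt (((n : ℝ) + 1 + γ) / (2 * α)))
    (ψ : ℕ → Polynomial ℝ) (hψ0 : ψ 0 = 1) (hψ1 : ψ 1 = C (1 / b 0) * X)
    (hψ : ∀ n : ℕ, 1 ≤ n →
      C (b n) * ψ (n + 1) = X * ψ n - C (b (n - 1)) * ψ (n - 1)) :
    ∀ n : ℕ, ∀ x : ℝ,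
      x ^ 2 * (derivative (derivative (ψ n))).eval x
        + (γ - 2 * α * x ^ 2) * x * (derivative (ψ n)).eval x
        + (2 * α * (n : ℝ) * x ^ 2 - γ * (1 - (-1 : ℝ) ^ n) / 2) * (ψ n).eval x = 0 := by
  have h2α : (0:ℝ) < 2*α := by linarith
  have hbpos : ∀ n : ℕ, 0 < b n := by
    intro n
    rw [hb n]
    split_ifs
    · refine Real.sqrt_pos.mpr (div_pos ?_ h2α)
      positivity
    · refine Real.sqrt_pos.mpr (div_pos ?_ h2α)
      have : (0:ℝ) ≤ (n:ℝ) := Nat.cast_nonneg n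
      linarith
  have hbne : ∀ n : ℕ, (C (b n) : ℝ[X]) ≠ 0 := fun n => by
    simpa [C_ne_zero] using (hbpos n).ne'
  have hbO : ∀ k : ℕ, 2*α*(b (2*k))^2 = 2*(k:ℝ)+1+γ := by
    intro k
    have h1 : ¬ Even (2*k+1) := by simp [parity_simps]
    have h0 : (0:ℝ) ≤ (((2*k:ℕ):ℝ)+1+γ)/(2*α) := by
      have : (0:ℝ) ≤ ((2*k:ℕ):ℝ) := Nat.cast_nonneg _
      apply div_nonneg _ h2α.le
      linarith
    rw [hb (2*k), if_neg h1, Real.sq_sqrt h0,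
      show ((2*k:ℕ):ℝ) = 2*(k:ℝ) from by push_cast; ring]
    field_simp
  have hbE : ∀ k : ℕ, 2*α*(b (2*k+1))^2 = 2*(k:ℝ)+2 := by
    intro k
    have h1 : Even (2*k+1+1) := by simp [parity_simps]
    have h0 : (0:ℝ) ≤ (((2*k+1:ℕ):ℝ)+1)/(2*α) := by positivity
    rw [hb (2*k+1), if_pos h1, Real.sq_sqrt h0,
      show ((2*k+1:ℕ):ℝ) = 2*(k:ℝ)+1 from by push_cast; ring]
    field_simp
    ring
  have hCO : ∀ k : ℕ, (C (2*α) : ℝ[X]) * (C (b (2*k)) * C (b (2*k))) = 2 * C ((k:ℝ)) + 1 + C γ := by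
    intro k
    rw [← C_mul, ← C_mul, show 2*α*(b (2*k)*b (2*k)) = 2*(k:ℝ)+1+γ from by
      linear_combination hbO k]
    simp [C_add, C_mul, map_ofNat]
  have hCE : ∀ k : ℕ, (C (2*α) : ℝ[X]) * (C (b (2*k+1)) * C (b (2*k+1))) = 2 * C ((k:ℝ)) + 2 := by
    intro k
    rw [← C_mul, ← C_mul, show 2*α*(b (2*k+1)*b (2*k+1)) = 2*(k:ℝ)+2 from by
      linear_combination hbE k]
    simp [C_add, C_mul, map_ofNat]
  have hCO' : ∀ k : ℕ, (C (2*α) : ℝ[X]) * (C (b (2*k+2)) * C (b (2*k+2))) = 2 * C ((k:ℝ)) + 3 + C γ := by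
    intro k
    have h := hCO (k+1)
    rw [show 2*(k+1) = 2*k+2 from by omega] at h
    rw [show ((k+1:ℕ):ℝ) = (k:ℝ)+1 from by push_cast; ring, C_add, C_1] at h
    linear_combination h
  have hCE' : ∀ k : ℕ, (C (2*α) : ℝ[X]) * (C (b (2*k+3)) * C (b (2*k+3))) = 2 * C ((k:ℝ)) + 4 := by
    intro k
    have h := hCE (k+1)
    rw [show 2*(k+1)+1 = 2*k+3 from by omega] at h
    rw [show ((k+1:ℕ):ℝ) = (k:ℝ)+1 from by push_cast; ring, C_add, C_1] at h
    linear_combination h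
  have hCO0 : (C (2*α) : ℝ[X]) * (C (b 0) * C (b 0)) = 1 + C γ := by
    have h := hCO 0
    rw [show (2*0 : ℕ) = 0 from rfl, Nat.cast_zero, C_0] at h
    linear_combination h
  have hCE0 : (C (2*α) : ℝ[X]) * (C (b 1) * C (b 1)) = 2 := by
    have h := hCE 0
    rw [show (2*0+1 : ℕ) = 1 from rfl, Nat.cast_zero, C_0] at h
    linear_combination h
  have hR : ∀ m : ℕ, C (b (m+1)) * ψ (m+2) = X * ψ (m+1) - C (b m) * ψ m := by
    intro m
    have h := hψ (m+1) (Nat.le_add_left 1 m)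
    simpa using h
  have hdR : ∀ m : ℕ, C (b (m+1)) * derivative (ψ (m+2))
      = ψ (m+1) + X * derivative (ψ (m+1)) - C (b m) * derivative (ψ m) := by
    intro m
    have h := congrArg derivative (hR m)
    simp only [derivative_mul, derivative_sub, derivative_C, derivative_X, zero_mul, one_mul,
      zero_add] at h
    linear_combination h
  have hd1 : derivative (ψ 1) = C (1/b 0) := by rw [hψ1]; simp
  have hd0 : derivative (ψ 0) = 0 := by rw [hψ0]; simp
  have key : ∀ k : ℕ,
      (X * derivative (ψ (2*k+1)) + C γ * ψ (2*k+1) = C (2*α) * C (b (2*k)) * (X * ψ (2*k)))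
      ∧ derivative (ψ (2*k+2)) = C (2*α) * C (b (2*k+1)) * ψ (2*k+1) := by
    intro k
    induction k with
    | zero =>
      constructor
      · show X * derivative (ψ 1) + C γ * ψ 1 = C (2*α) * C (b 0) * (X * ψ 0)
        have hinv : (C (1/b 0) : ℝ[X]) * C (b 0) = 1 := by
          rw [← C_mul, one_div, inv_mul_cancel₀ (hbpos 0).ne', C_1]
        rw [hd1, hψ1, hψ0]
        linear_combination (-(X * C (1/b 0))) * hCO0 + C (2*α) * C (b 0) * X * hinv
      · show derivative (ψ 2) = C (2*α) * C (b 1) * ψ 1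
        refine mul_left_cancel₀ (hbne 1) ?_
        have e : C (b 1) * derivative (ψ 2)
            = ψ 1 + X * derivative (ψ 1) - C (b 0) * derivative (ψ 0) := hdR 0
        linear_combination e + X * hd1 - C (b 0) * hd0 - ψ 1 * hCE0 - hψ1
    | succ k ih =>
      obtain ⟨K1, K2⟩ := ih
      have R1 : C (b (2*k+1)) * ψ (2*k+2) = X * ψ (2*k+1) - C (b (2*k)) * ψ (2*k) := hR (2*k)
      have R2 : C (b (2*k+2)) * ψ (2*k+3) = X * ψ (2*k+2) - C (b (2*k+1)) * ψ (2*k+1) :=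
        hR (2*k+1)
      have R3 : C (b (2*k+3)) * ψ (2*k+4) = X * ψ (2*k+3) - C (b (2*k+2)) * ψ (2*k+2) :=
        hR (2*k+2)
      have dR2 : C (b (2*k+2)) * derivative (ψ (2*k+3))
          = ψ (2*k+2) + X * derivative (ψ (2*k+2)) - C (b (2*k+1)) * derivative (ψ (2*k+1)) :=
        hdR (2*k+1)
      have dR3 : C (b (2*k+3)) * derivative (ψ (2*k+4))
          = ψ (2*k+3) + X * derivative (ψ (2*k+3)) - C (b (2*k+2)) * derivative (ψ (2*k+2)) :=
        hdR (2*k+2)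
      have hce := hCE k
      have hco2 := hCO' k
      have hce2 := hCE' k
      have g1 : X * derivative (ψ (2*k+3)) + C γ * ψ (2*k+3)
          = C (2*α) * C (b (2*k+2)) * (X * ψ (2*k+2)) := by
        refine mul_left_cancel₀ (hbne (2*k+2)) ?_
        linear_combination X * dR2 + C γ * R2 + X^2 * K2 - C (b (2*k+1)) * K1
          - C (2*α) * C (b (2*k+1)) * X * R1 + X * ψ (2*k+2) * hce - X * ψ (2*k+2) * hco2
      have g2 : derivative (ψ (2*k+4)) = C (2*α) * C (b (2*k+3)) * ψ (2*k+3) := by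
        refine mul_left_cancel₀ (hbne (2*k+3)) ?_
        linear_combination dR3 + g1 - C (b (2*k+2)) * K2 - C (2*α) * C (b (2*k+2)) * R2
          + ψ (2*k+3) * hco2 - ψ (2*k+3) * hce2
      exact ⟨g1, g2⟩
  intro n x
  obtain ⟨m, hm | hm⟩ := Nat.even_or_odd' n
  · subst hm
    cases m with
    | zero => simp [hψ0]
    | succ j =>
      have K2 : derivative (ψ (2*j+2)) = C (2*α) * C (b (2*j+1)) * ψ (2*j+1) := (key j).2
      have e1 : X * derivative (ψ (2*j+3)) + C γ * ψ (2*j+3)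
          = C (2*α) * C (b (2*j+2)) * (X * ψ (2*j+2)) := (key (j+1)).1
      have R2 : C (b (2*j+2)) * ψ (2*j+3) = X * ψ (2*j+2) - C (b (2*j+1)) * ψ (2*j+1) :=
        hR (2*j+1)
      have dR2 : C (b (2*j+2)) * derivative (ψ (2*j+3))
          = ψ (2*j+2) + X * derivative (ψ (2*j+2)) - C (b (2*j+1)) * derivative (ψ (2*j+1)) :=
        hdR (2*j+1)
      have dK2 : derivative (derivative (ψ (2*j+2)))
          = C (2*α) * C (b (2*j+1)) * derivative (ψ (2*j+1)) := by
        rw [K2]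
        simp only [derivative_mul, derivative_C, zero_mul, add_zero, zero_add, mul_zero]
      have h2 : C (2*α) * (C (b (2*j+2)) * derivative (ψ (2*j+3)))
          = C (2*α) * ψ (2*j+2) + C (2*α) * X * derivative (ψ (2*j+2))
            - derivative (derivative (ψ (2*j+2))) := by
        linear_combination C (2*α) * dR2 + dK2
      have h4 : C (2*α) * (C (b (2*j+2)) * ψ (2*j+3))
          = C (2*α) * X * ψ (2*j+2) - derivative (ψ (2*j+2)) := by
        linear_combination C (2*α) * R2 + K2
      have e6 := hCO' j
      have T : X^2 * derivative (derivative (ψ (2*j+2)))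
          + (C γ - C (2*α) * X^2) * (X * derivative (ψ (2*j+2)))
          + (C (2*α) * (2 * C ((j:ℝ)) + 2) * X^2) * ψ (2*j+2) = 0 := by
        linear_combination (-(X * C (2*α) * C (b (2*j+2)))) * e1 + X^2 * h2 + X * C γ * h4
          - C (2*α) * X^2 * ψ (2*j+2) * e6
      have hev := congrArg (eval x) T
      simp only [eval_add, eval_sub, eval_mul, eval_pow, eval_X, eval_C, eval_ofNat,
        eval_zero, eval_one] at hev
      rw [show 2*(j+1) = 2*j+2 from by omega]
      have hpow : ((-1:ℝ))^(2*j+2) = 1 := Even.neg_one_pow ⟨j+1, by ring⟩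
      rw [hpow]
      push_cast
      linear_combination hev
  · subst hm
    have K1 : X * derivative (ψ (2*m+1)) + C γ * ψ (2*m+1)
        = C (2*α) * C (b (2*m)) * (X * ψ (2*m)) := (key m).1
    have K2 : derivative (ψ (2*m+2)) = C (2*α) * C (b (2*m+1)) * ψ (2*m+1) := (key m).2
    have dR1 : C (b (2*m+1)) * derivative (ψ (2*m+2))
        = ψ (2*m+1) + X * derivative (ψ (2*m+1)) - C (b (2*m)) * derivative (ψ (2*m)) :=
      hdR (2*m)
    have f2 := congrArg derivative K1
    simp only [derivative_add, derivative_mul, derivative_C, derivative_X, zero_mul, one_mul,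
      zero_add, add_zero, mul_zero] at f2
    have f5 := hCE m
    have T : X^2 * derivative (derivative (ψ (2*m+1)))
        + (C γ - C (2*α) * X^2) * (X * derivative (ψ (2*m+1)))
        + (C (2*α) * (2 * C ((m:ℝ)) + 1) * X^2 - C γ) * ψ (2*m+1) = 0 := by
      linear_combination (-1 : ℝ[X]) * K1 + X * f2 + C (2*α) * X^2 * dR1
        - C (2*α) * X^2 * C (b (2*m+1)) * K2 - C (2*α) * X^2 * ψ (2*m+1) * f5
    have hev := congrArg (eval x) T
    simp only [eval_add, eval_sub, eval_mul, eval_pow, eval_X, eval_C, eval_ofNat,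
      eval_zero, eval_one] at hev
    have hpow : ((-1:ℝ))^(2*m+1) = -1 := Odd.neg_one_pow ⟨m, by ring⟩
    rw [hpow]
    push_cast
    linear_combination hev
end

section
/- Let (v_n)_{n≥0} be a real sequence with v_0 = 1, let (ε_k)_{k≥1} be the associated coefficient sequence, and let K ≥ 1. Then the following are equivalent: (a) for every n > K, Σ_{k=1}^{K} ε_k · n!/(n−k)! = v_{n-1} (i.e. the generalized derivation operator D_v is a differential operator of order at most K); (b) ε_k = 0 for all k ≥ K+1. -/
open Polynomial Finset
open scoped Nat

/-!
Clearing denominators, the recursion defining `ε` says exactly that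
`v (n - 1) = ∑_{k=1}^{n} ε k · n!/(n-k)!` for every `n ≥ 1`. Hence (a) holds iff the tail
`∑_{k=K+1}^{n} ε k · n!/(n-k)!` vanishes for every `n > K`. This is a triangular system in
`ε (K+1), ε (K+2), …` with nonzero diagonal entries `n!`, whose only solution is zero.
-/

theorem Nat.cast_descFactorial_eq_factorial_div {F : Type*} [DivisionRing F] [CharZero F]
    {n k : ℕ} (h : k ≤ n) : (n.descFactorial k : F) = n ! / (n - k)! := by
  rw [eq_div_iff (Nat.cast_ne_zero.2 (n - k).factorial_ne_zero), ← Nat.cast_mul, mul_comm,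
    Nat.factorial_mul_descFactorial h]

theorem sum_Ioc_mul_eq_zero_iff_of_triangular {R : Type*} [Semiring R] [NoZeroDivisors R]
    (ε : ℕ → R) (c : ℕ → ℕ → R) (hc : ∀ n, c n n ≠ 0) (K : ℕ) :
    (∀ n, K < n → ∑ j ∈ Ioc K n, ε j * c n j = 0) ↔ ∀ k, K < k → ε k = 0 := by
  refine ⟨fun h k hk => ?_, fun h n _ => sum_eq_zero fun j hj => by
    rw [h j (mem_Ioc.1 hj).1, zero_mul]⟩
  induction k using Nat.strong_induction_on with
  | _ k ih =>
    obtain ⟨m, rfl⟩ : ∃ m, k = m + 1 := Nat.exists_eq_add_one.2 (K.zero_le.trans_lt hk)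
    have hlower : ∑ j ∈ Ioc K m, ε j * c (m + 1) j = 0 := sum_eq_zero fun j hj => by
      rw [ih j (by grind) (mem_Ioc.1 hj).1, zero_mul]
    have hdiag := h (m + 1) hk
    rw [sum_Ioc_succ_top (Nat.lt_succ_iff.1 hk), hlower, zero_add] at hdiag
    exact (mul_eq_zero.1 hdiag).resolve_right (hc _)

theorem sum_Icc_mul_descFactorial_eq (v ε : ℕ → ℝ) (hv0 : v 0 = 1) (hε1 : ε 1 = 1)
    (hεk : ∀ k : ℕ, 2 ≤ k →
      ε k = v (k - 1) / (k ! : ℝ) - ∑ j ∈ Icc 1 (k - 1), ε j / ((k - j)! : ℝ))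
    {n : ℕ} (hn : 1 ≤ n) : ∑ j ∈ Icc 1 n, ε j * (n.descFactorial j : ℝ) = v (n - 1) := by
  obtain ⟨m, rfl⟩ : ∃ m, n = m + 1 := Nat.exists_eq_add_one.2 hn
  rcases m.eq_zero_or_pos with rfl | hm
  · simp [hv0, hε1]
  have hlower : ∑ j ∈ Icc 1 m, ε j * ((m + 1).descFactorial j : ℝ)
      = (m + 1)! * ∑ j ∈ Icc 1 m, ε j / ((m + 1 - j)! : ℝ) := by
    rw [mul_sum]
    refine sum_congr rfl fun j hj => ?_
    rw [Nat.cast_descFactorial_eq_factorial_div (by grind)]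
    ring
  have hfac : ((m + 1)! : ℝ) ≠ 0 := by positivity
  rw [sum_Icc_succ_top (by omega), hlower, Nat.descFactorial_self, hεk (m + 1) (by omega),
    Nat.add_sub_cancel]
  field_simp
  ring

theorem stmt_4_general (v : ℕ → ℝ) (hv0 : v 0 = 1) (K : ℕ) (ε : ℕ → ℝ)
    (hε1 : ε 1 = 1)
    (hεk : ∀ k : ℕ, 2 ≤ k →
      ε k = v (k - 1) / (Nat.factorial k : ℝ)
        - ∑ j ∈ Finset.Icc 1 (k - 1), ε j / (Nat.factorial (k - j) : ℝ)) :
    (∀ n : ℕ, K < n →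
        ∑ k ∈ Finset.Icc 1 K, ε k * (Nat.descFactorial n k : ℝ) = v (n - 1)) ↔
      (∀ k : ℕ, K + 1 ≤ k → ε k = 0) := by
  have htail : ∀ n, K < n → (∑ k ∈ Icc 1 K, ε k * (n.descFactorial k : ℝ) = v (n - 1) ↔
      ∑ k ∈ Ioc K n, ε k * (n.descFactorial k : ℝ) = 0) := fun n hn => by
    have hIcc (m : ℕ) : Icc 1 m = Ioc 0 m := Icc_add_one_left_eq_Ioc 0 m
    rw [← sum_Icc_mul_descFactorial_eq v ε hv0 hε1 hεk (by omega : 1 ≤ n), hIcc, hIcc,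
      ← sum_Ioc_consecutive _ K.zero_le hn.le, left_eq_add]
  calc (∀ n, K < n → ∑ k ∈ Icc 1 K, ε k * (n.descFactorial k : ℝ) = v (n - 1))
      ↔ ∀ n, K < n → ∑ k ∈ Ioc K n, ε k * (n.descFactorial k : ℝ) = 0 :=
        forall₂_congr htail
    _ ↔ ∀ k, K < k → ε k = 0 :=
      sum_Ioc_mul_eq_zero_iff_of_triangular ε _ (fun n => by simp) K

theorem stmt_4 (v : ℕ → ℝ) (hv0 : v 0 = 1) (K : ℕ) (hK : 1 ≤ K) (ε : ℕ → ℝ)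
    (hε1 : ε 1 = 1)
    (hεk : ∀ k : ℕ, 2 ≤ k →
      ε k = v (k - 1) / (Nat.factorial k : ℝ)
        - ∑ j ∈ Finset.Icc 1 (k - 1), ε j / (Nat.factorial (k - j) : ℝ)) :
    (∀ n : ℕ, K < n →
        ∑ k ∈ Finset.Icc 1 K, ε k * (Nat.descFactorial n k : ℝ) = v (n - 1)) ↔
      (∀ k : ℕ, K + 1 ≤ k → ε k = 0) :=
  stmt_4_general v hv0 K ε hε1 hεk
end

section
/- Let (v_n)_{n≥0} be a real sequence with v_0 = 1, fixed first term v_1, and associated coefficient sequence (ε_k)_{k≥1}. Then ε_k = 0 for all k ≥ 3 if and only if v_n = (n(n+1)/2) v_1 − n² + 1 for all n ≥ 1. In that case ε_2 = v_1/2 − 1, so the generalized derivation operator is D_v p = p' + (v_1/2 − 1) x p''. In particular, for v_1 = 4 one gets v_n = (n+1)² and D_v p = p' + x p''. -/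
open Polynomial Finset

lemma Dv_eq_aux (ε : ℕ → ℝ) (hε1 : ε 1 = 1) (h3 : ∀ k : ℕ, 3 ≤ k → ε k = 0)
    (p : Polynomial ℝ) :
    Dv ε p = derivative p + C (ε 2) * X * derivative (derivative p) := by
  unfold Dv
  have h1 : ∑ k ∈ Finset.Icc 1 p.natDegree, C (ε k) * X ^ (k - 1) * derivative^[k] p
      = ∑ k ∈ Finset.Icc 1 (max p.natDegree 2), C (ε k) * X ^ (k - 1) * derivative^[k] p := by
    apply Finset.sum_subset (Finset.Icc_subset_Icc_right (le_max_left _ _))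
    intro k hk hk'
    simp only [Finset.mem_Icc] at hk hk'
    have hd : p.natDegree < k := by omega
    rw [Polynomial.iterate_derivative_eq_zero hd, mul_zero]
  have h2 : ∑ k ∈ Finset.Icc 1 (max p.natDegree 2), C (ε k) * X ^ (k - 1) * derivative^[k] p
      = ∑ k ∈ Finset.Icc 1 2, C (ε k) * X ^ (k - 1) * derivative^[k] p := by
    symm
    apply Finset.sum_subset (Finset.Icc_subset_Icc_right (le_max_right _ _))
    intro k hk hk'
    simp only [Finset.mem_Icc] at hk hk'
    have : ε k = 0 := h3 k (by omega)
    simp [this]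
  rw [h1, h2, show Finset.Icc 1 2 = {1, 2} by decide,
    Finset.sum_pair (by norm_num : (1:ℕ) ≠ 2), hε1]
  simp [Function.iterate_succ_apply']

theorem stmt_6 (v : ℕ → ℝ) (hv0 : v 0 = 1) (ε : ℕ → ℝ)
    (hε1 : ε 1 = 1)
    (hεk : ∀ k : ℕ, 2 ≤ k →
      ε k = v (k - 1) / (Nat.factorial k : ℝ)
        - ∑ j ∈ Finset.Icc 1 (k - 1), ε j / (Nat.factorial (k - j) : ℝ)) :
    ((∀ k : ℕ, 3 ≤ k → ε k = 0) ↔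
      (∀ n : ℕ, 1 ≤ n →
        v n = ((n : ℝ) * ((n : ℝ) + 1) / 2) * v 1 - (n : ℝ) ^ 2 + 1)) ∧
    ((∀ k : ℕ, 3 ≤ k → ε k = 0) →
      ε 2 = v 1 / 2 - 1 ∧
      ∀ p : Polynomial ℝ,
        Dv ε p = derivative p + C (v 1 / 2 - 1) * X * derivative (derivative p)) ∧
    ((∀ k : ℕ, 3 ≤ k → ε k = 0) → v 1 = 4 →
      (∀ n : ℕ, v n = ((n : ℝ) + 1) ^ 2) ∧
      ∀ p : Polynomial ℝ,
        Dv ε p = derivative p + X * derivative (derivative p)) := by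
  have hε2 : ε 2 = v 1 / 2 - 1 := by
    have h := hεk 2 (le_refl 2)
    norm_num [Nat.factorial, hε1] at h
    linarith
  have fwd : (∀ k : ℕ, 3 ≤ k → ε k = 0) →
      ∀ n : ℕ, 1 ≤ n →
        v n = ((n : ℝ) * ((n : ℝ) + 1) / 2) * v 1 - (n : ℝ) ^ 2 + 1 := by
    intro h3 n hn
    rcases Nat.lt_or_ge n 2 with hn2 | hn2
    · obtain rfl : n = 1 := by omega
      norm_num
    · obtain ⟨m, rfl⟩ : ∃ m, n = m + 2 := ⟨n - 2, by omega⟩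
      have h := hεk (m+3) (by omega)
      rw [h3 (m+3) (by omega)] at h
      have hsum : ∑ j ∈ Finset.Icc 1 (m+3-1), ε j / (Nat.factorial (m+3-j) : ℝ)
          = 1 / (Nat.factorial (m+2) : ℝ) + (v 1 / 2 - 1) / (Nat.factorial (m+1) : ℝ) := by
        rw [show m+3-1 = m+2 by omega]
        rw [show (Finset.Icc 1 (m+2) : Finset ℕ) = Finset.Icc 1 2 ∪ Finset.Icc 3 (m+2) by
          ext x; simp only [Finset.mem_Icc, Finset.mem_union]; omega]
        rw [Finset.sum_union (by
          simp only [Finset.disjoint_left, Finset.mem_Icc]; omega)]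
        have hz : ∑ j ∈ Finset.Icc 3 (m+2), ε j / (Nat.factorial (m+3-j) : ℝ) = 0 := by
          apply Finset.sum_eq_zero
          intro j hj
          simp only [Finset.mem_Icc] at hj
          rw [h3 j hj.1, zero_div]
        rw [hz, add_zero, show Finset.Icc 1 2 = {1, 2} by decide,
          Finset.sum_pair (by norm_num : (1:ℕ) ≠ 2), hε1, hε2,
          show m+3-1 = m+2 by omega, show m+3-2 = m+1 by omega]
      rw [hsum, show m+3-1 = m+2 by omega] at h
      have hF : (Nat.factorial (m+3) : ℝ) ≠ 0 := Nat.cast_ne_zero.mpr (Nat.factorial_ne_zero _)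
      have h2 : v (m+2) / (Nat.factorial (m+3) : ℝ)
          = 1 / (Nat.factorial (m+2) : ℝ) + (v 1 / 2 - 1) / (Nat.factorial (m+1) : ℝ) := by
        linarith
      rw [div_eq_iff hF] at h2
      rw [h2]
      have hm : (Nat.factorial m : ℝ) ≠ 0 := Nat.cast_ne_zero.mpr (Nat.factorial_ne_zero m)
      have hm1 : ((m : ℝ) + 1) ≠ 0 := by positivity
      simp only [show m+3 = m+1+1+1 by omega, show m+2 = m+1+1 by omega, Nat.factorial_succ]
      push_cast
      field_simp
      ring
  have bwd : (∀ n : ℕ, 1 ≤ n →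
        v n = ((n : ℝ) * ((n : ℝ) + 1) / 2) * v 1 - (n : ℝ) ^ 2 + 1) →
      ∀ k : ℕ, 3 ≤ k → ε k = 0 := by
    intro hv k
    induction k using Nat.strong_induction_on with
    | _ k ih =>
      intro hk
      obtain ⟨m, rfl⟩ : ∃ m, k = m + 3 := ⟨k - 3, by omega⟩
      have h := hεk (m+3) (by omega)
      have hsum : ∑ j ∈ Finset.Icc 1 (m+3-1), ε j / (Nat.factorial (m+3-j) : ℝ)
          = 1 / (Nat.factorial (m+2) : ℝ) + (v 1 / 2 - 1) / (Nat.factorial (m+1) : ℝ) := by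
        rw [show m+3-1 = m+2 by omega]
        rw [show (Finset.Icc 1 (m+2) : Finset ℕ) = Finset.Icc 1 2 ∪ Finset.Icc 3 (m+2) by
          ext x; simp only [Finset.mem_Icc, Finset.mem_union]; omega]
        rw [Finset.sum_union (by
          simp only [Finset.disjoint_left, Finset.mem_Icc]; omega)]
        have hz : ∑ j ∈ Finset.Icc 3 (m+2), ε j / (Nat.factorial (m+3-j) : ℝ) = 0 := by
          apply Finset.sum_eq_zero
          intro j hj
          simp only [Finset.mem_Icc] at hj
          rw [ih j (by omega) hj.1, zero_div]
        rw [hz, add_zero, show Finset.Icc 1 2 = {1, 2} by decide,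
          Finset.sum_pair (by norm_num : (1:ℕ) ≠ 2), hε1, hε2,
          show m+3-1 = m+2 by omega, show m+3-2 = m+1 by omega]
      rw [hsum, show m+3-1 = m+2 by omega, hv (m+2) (by omega)] at h
      rw [h]
      have hm : (Nat.factorial m : ℝ) ≠ 0 := Nat.cast_ne_zero.mpr (Nat.factorial_ne_zero m)
      have hm1 : ((m : ℝ) + 1) ≠ 0 := by positivity
      simp only [show m+3 = m+1+1+1 by omega, show m+2 = m+1+1 by omega, Nat.factorial_succ]
      push_cast
      field_simp
      ring
  refine ⟨⟨fwd, bwd⟩, fun h3 => ⟨hε2, fun p => by rw [Dv_eq_aux ε hε1 h3 p, hε2]⟩,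
    fun h3 hv1 => ⟨?_, ?_⟩⟩
  · intro n
    rcases Nat.eq_zero_or_pos n with rfl | hn
    · simpa using hv0
    · rw [fwd h3 n hn, hv1]; ring
  · intro p
    rw [Dv_eq_aux ε hε1 h3 p, hε2, hv1]
    norm_num
end

section
/- Take the weights w_k = k for all k ≥ 1. Then the associated nested-sum coefficients satisfy α_{2m-1,n-1} = n! / (2^m · m! · (n−2m)!) for all n ≥ 1 and 0 ≤ m with 2m ≤ n. (This is the case of the Hermite polynomials.) -/
open Finset

lemma aux_alpha : ∀ m n : ℕ, 2 * m ≤ n →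
    alphaC (fun k => (k : ℝ)) m (n - 1) =
      (Nat.factorial n : ℝ) /
        (2 ^ m * (Nat.factorial m : ℝ) * (Nat.factorial (n - 2 * m) : ℝ)) := by
  intro m
  induction m with
  | zero =>
    intro n _
    simp [alphaC, div_self, Nat.factorial_ne_zero,
      (by exact_mod_cast Nat.factorial_ne_zero n : ((Nat.factorial n : ℝ)) ≠ 0)]
  | succ m ih =>
    intro n hn
    have hn2 : 2 * m + 2 ≤ n := by omega
    rw [alphaC]
    have hterm : ∀ k ∈ Finset.Icc (2 * m + 1) (n - 1),
        (k : ℝ) * alphaC (fun k => (k : ℝ)) m (k - 2) =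
          (k.choose (2 * m + 1) : ℝ) * (Nat.factorial (2 * m + 1) : ℝ) /
            (2 ^ m * (Nat.factorial m : ℝ)) := by
      intro k hk
      rw [Finset.mem_Icc] at hk
      have hk1 : 2 * m + 1 ≤ k := hk.1
      have h2 : k - 2 = (k - 1) - 1 := by omega
      rw [h2, ih (k - 1) (by omega)]
      have h3 : k - 1 - 2 * m = k - (2 * m + 1) := by omega
      rw [h3]
      have hfac : (k.choose (2 * m + 1)) * Nat.factorial (2 * m + 1) *
          Nat.factorial (k - (2 * m + 1)) = Nat.factorial k :=
        Nat.choose_mul_factorial_mul_factorial hk1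
      have hkfac : (k : ℝ) * (Nat.factorial (k - 1) : ℝ) = (Nat.factorial k : ℝ) := by
        rw [← Nat.cast_mul, Nat.mul_factorial_pred (by omega)]
      have hne1 : ((2:ℝ) ^ m * (Nat.factorial m : ℝ)) ≠ 0 := by
        positivity
      have hne2 : ((Nat.factorial (k - (2 * m + 1)) : ℝ)) ≠ 0 := by
        exact_mod_cast Nat.factorial_ne_zero _
      rw [mul_div_assoc'] at *
      rw [hkfac]
      rw [← hfac]
      push_cast
      field_simp
    rw [Finset.sum_congr rfl hterm, ← Finset.sum_div, ← Finset.sum_mul]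
    have hsum : ∑ k ∈ Finset.Icc (2 * m + 1) (n - 1), (k.choose (2 * m + 1) : ℝ) =
        (n.choose (2 * m + 2) : ℝ) := by
      rw [← Nat.cast_sum]
      norm_cast
      rw [Nat.sum_Icc_choose]
      congr 1
      omega
    rw [hsum]
    have hfac : (n.choose (2 * m + 2)) * Nat.factorial (2 * m + 2) *
        Nat.factorial (n - (2 * m + 2)) = Nat.factorial n :=
      Nat.choose_mul_factorial_mul_factorial hn2
    have h4 : n - 2 * (m + 1) = n - (2 * m + 2) := by omega
    rw [h4, ← hfac]
    have hne : ((Nat.factorial (n - (2 * m + 2)) : ℝ)) ≠ 0 := by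
      exact_mod_cast Nat.factorial_ne_zero _
    have hne2 : ((Nat.factorial m : ℝ)) ≠ 0 := by
      exact_mod_cast Nat.factorial_ne_zero _
    have hstep : Nat.factorial (2 * m + 2) =
        (2 * m + 2) * Nat.factorial (2 * m + 1) :=
      Nat.factorial_succ (2 * m + 1)
    rw [hstep]
    push_cast [Nat.factorial_succ]
    field_simp
    ring

theorem stmt_10 :
    ∀ n : ℕ, 1 ≤ n → ∀ m : ℕ, 2 * m ≤ n →
      alphaC (fun k => (k : ℝ)) m (n - 1) =
        (Nat.factorial n : ℝ) /
          (2 ^ m * (Nat.factorial m : ℝ) * (Nat.factorial (n - 2 * m) : ℝ)) := by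
  intro n _ m hm
  exact aux_alpha m n hm
end

section
/- Let γ > −1 and define v_n = (γ+n+1)/(γ+1) if n is even and v_n = (n+1)/(γ+1) if n is odd (so v_0 = 1, v_1 = 2/(γ+1)). Then the associated coefficient sequence satisfies ε_1 = 1 and, for every m ≥ 2, ε_m = ((−2)^{m-1}/m!) · γ/(γ+1). -/
/-!
Put `c = γ / (γ + 1)`. For `j ≥ 1` the claimed values are
`ε j = -(c / 2) * (-2) ^ j / j ! + [j = 1] / (γ + 1)`, and the recurrence says
`∑ j ∈ Icc 1 k, ε j / (k - j)! = v (k - 1) / k !`. Multiplying by `k !` turns the left side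
into a binomial sum, `-(c / 2) * ((1 - 2) ^ k - 1) + k / (γ + 1)`, which equals `v (k - 1)` for
either parity of `k`. Since the recurrence determines `ε` from `ε 1`, this identifies `ε`.
-/

open Finset Nat

theorem eq_of_eq_sub_sum_Icc {K : Type*} [DivisionRing K] {a b f : ℕ → K} (c : ℕ → K)
    (h₁ : a 1 = b 1)
    (ha : ∀ k, 2 ≤ k → a k = f k - ∑ j ∈ Icc 1 (k - 1), a j / c (k - j))
    (hb : ∀ k, 2 ≤ k → b k = f k - ∑ j ∈ Icc 1 (k - 1), b j / c (k - j)) :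
    ∀ m, 1 ≤ m → a m = b m := by
  intro m
  induction m using Nat.strong_induction_on with
  | _ m ih =>
    intro hm
    rcases hm.eq_or_lt with rfl | hm
    · exact h₁
    rw [ha m hm, hb m hm]
    congr 1
    refine sum_congr rfl fun j hj => ?_
    obtain ⟨hj₁, hjm⟩ := mem_Icc.1 hj
    rw [ih j (by omega) hj₁]

theorem sum_Icc_one_pow_mul_choose {R : Type*} [CommRing R] (x : R) (k : ℕ) :
    ∑ j ∈ Icc 1 k, x ^ j * k.choose j = (x + 1) ^ k - 1 := by
  rw [add_pow, range_succ_eq_Icc_zero, ← insert_Icc_add_one_left_eq_Icc k.zero_le,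
    sum_insert (by simp)]
  simp

theorem sum_Icc_one_pow_div_factorial {K : Type*} [Field K] [CharZero K] (x : K) (k : ℕ) :
    ∑ j ∈ Icc 1 k, x ^ j / j ! / (k - j)! = ((x + 1) ^ k - 1) / k ! := by
  rw [← sum_Icc_one_pow_mul_choose, sum_div]
  refine sum_congr rfl fun j hj => ?_
  have : (k ! : K) ≠ 0 := by exact_mod_cast k.factorial_ne_zero
  rw [cast_choose K (mem_Icc.1 hj).2]
  field_simp

noncomputable def hermiteChiharaV (γ : ℝ) (n : ℕ) : ℝ :=
  if Even n then (γ + n + 1) / (γ + 1) else (n + 1) / (γ + 1)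

theorem hermiteChiharaV_sub_one (γ : ℝ) {k : ℕ} (hk : 1 ≤ k) :
    hermiteChiharaV γ (k - 1) = (k + γ * (1 - (-1) ^ k) / 2) / (γ + 1) := by
  obtain ⟨n, rfl⟩ := Nat.exists_eq_add_of_le' hk
  rw [hermiteChiharaV, Nat.add_sub_cancel, pow_succ]
  rcases n.even_or_odd with hn | hn
  · rw [if_pos hn, hn.neg_one_pow]
    push_cast; ring
  · rw [if_neg (Nat.not_even_iff_odd.2 hn), hn.neg_one_pow]
    push_cast; ring

noncomputable def hermiteChiharaEps (γ : ℝ) (m : ℕ) : ℝ :=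
  if m = 1 then 1 else (-2) ^ (m - 1) / m ! * (γ / (γ + 1))

theorem hermiteChiharaEps_eq_add_ite {γ : ℝ} (hγ : γ + 1 ≠ 0) {j : ℕ} (hj : 1 ≤ j) :
    hermiteChiharaEps γ j
      = -(γ / (γ + 1) / 2) * ((-2) ^ j / j !) + if j = 1 then 1 / (γ + 1) else 0 := by
  rw [hermiteChiharaEps]
  split_ifs with h
  · subst h; field_simp; ring
  · obtain ⟨n, rfl⟩ := Nat.exists_eq_add_of_le' hj
    rw [Nat.add_sub_cancel, pow_succ]
    ring

theorem sum_Icc_hermiteChiharaEps_div_factorial {γ : ℝ} (hγ : γ + 1 ≠ 0) {k : ℕ}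
    (hk : 1 ≤ k) :
    ∑ j ∈ Icc 1 k, hermiteChiharaEps γ j / (k - j)! = hermiteChiharaV γ (k - 1) / k ! := by
  have hsplit : ∑ j ∈ Icc 1 k, hermiteChiharaEps γ j / (k - j)!
      = -(γ / (γ + 1) / 2) * ∑ j ∈ Icc 1 k, (-2 : ℝ) ^ j / j ! / (k - j)!
        + ∑ j ∈ Icc 1 k, if j = 1 then 1 / (γ + 1) / (k - j)! else 0 := by
    rw [mul_sum, ← sum_add_distrib]
    refine sum_congr rfl fun j hj => ?_
    rw [hermiteChiharaEps_eq_add_ite hγ (mem_Icc.1 hj).1, add_div, mul_div_assoc, ite_div,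
      zero_div]
  rw [hsplit, sum_Icc_one_pow_div_factorial, sum_ite_eq' _ _ fun j => 1 / (γ + 1) / (k - j)!,
    if_pos (mem_Icc.2 ⟨le_rfl, hk⟩), hermiteChiharaV_sub_one γ hk]
  obtain ⟨n, rfl⟩ := Nat.exists_eq_add_of_le' hk
  rw [Nat.add_sub_cancel, Nat.factorial_succ]
  push_cast
  field_simp
  ring

theorem hermiteChiharaEps_eq_sub_sum {γ : ℝ} (hγ : γ + 1 ≠ 0) (k : ℕ) (hk : 2 ≤ k) :
    hermiteChiharaEps γ k = hermiteChiharaV γ (k - 1) / (k)!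
      - ∑ j ∈ Icc 1 (k - 1), hermiteChiharaEps γ j / (k - j)! := by
  rw [← sum_Icc_hermiteChiharaEps_div_factorial hγ (by omega : 1 ≤ k)]
  obtain ⟨n, rfl⟩ := Nat.exists_eq_add_of_le' (by omega : 1 ≤ k)
  rw [Nat.add_sub_cancel, sum_Icc_succ_top (by omega), Nat.sub_self, factorial_zero]
  simp

theorem stmt_11 (γ : ℝ) (hγ : -1 < γ) (v : ℕ → ℝ)
    (hv : ∀ n : ℕ, v n = if Even n then (γ + (n : ℝ) + 1) / (γ + 1)
                         else ((n : ℝ) + 1) / (γ + 1))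
    (ε : ℕ → ℝ) (hε1 : ε 1 = 1)
    (hεk : ∀ k : ℕ, 2 ≤ k →
      ε k = v (k - 1) / (Nat.factorial k : ℝ)
        - ∑ j ∈ Finset.Icc 1 (k - 1), ε j / (Nat.factorial (k - j) : ℝ)) :
    ε 1 = 1 ∧
    ∀ m : ℕ, 2 ≤ m →
      ε m = (-2 : ℝ) ^ (m - 1) / (Nat.factorial m : ℝ) * (γ / (γ + 1)) := by
  have hγ' : γ + 1 ≠ 0 := by linarith
  obtain rfl : v = hermiteChiharaV γ := funext hv
  refine ⟨hε1, fun m hm => ?_⟩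
  have hε1' : ε 1 = hermiteChiharaEps γ 1 := by rw [hε1, hermiteChiharaEps, if_pos rfl]
  have hεm := eq_of_eq_sub_sum_Icc (fun n => (n ! : ℝ)) hε1' hεk
    (hermiteChiharaEps_eq_sub_sum hγ') m (by omega)
  rw [hεm, hermiteChiharaEps, if_neg (by omega)]
end

section
/- Let γ > −1 and let ψ_n be the generalized Hermite polynomials (with normalization α = 1). Then for every n ≥ 2 and all real x: x ψ_n'(x) = (n/b_{n-1}) x ψ_{n-1}(x) + ((n−1) θ_n / (2 b_{n-1} b_{n-2})) ψ_{n-2}(x), where θ_n = γ(1−(−1)^n)/2. -/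
open Polynomial

theorem stmt_13 (γ : ℝ) (hγ : -1 < γ) (b : ℕ → ℝ)
    (hb : ∀ n : ℕ, b n = if Even (n + 1) then Real.sqrt (((n : ℝ) + 1) / 2)
                         else Real.sqrt (((n : ℝ) + 1 + γ) / 2))
    (ψ : ℕ → Polynomial ℝ) (hψ0 : ψ 0 = 1) (hψ1 : ψ 1 = C (1 / b 0) * X)
    (hψ : ∀ n : ℕ, 1 ≤ n →
      C (b n) * ψ (n + 1) = X * ψ n - C (b (n - 1)) * ψ (n - 1)) :
    ∀ n : ℕ, 2 ≤ n → ∀ x : ℝ,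
      x * (derivative (ψ n)).eval x =
        ((n : ℝ) / b (n - 1)) * x * (ψ (n - 1)).eval x
          + (((n : ℝ) - 1) * (γ * (1 - (-1 : ℝ) ^ n) / 2) / (2 * b (n - 1) * b (n - 2)))
              * (ψ (n - 2)).eval x := by
  set θ : ℕ → ℝ := fun n => γ * (1 - (-1 : ℝ) ^ n) / 2 with hθdef
  have hθp : ∀ k, θ (k + 2) = θ k := by
    intro k; simp only [hθdef]; rw [pow_add]; norm_num
  have hθ0 : ∀ k, θ k * θ (k + 1) = 0 := by
    intro k
    rcases Nat.even_or_odd k with h | h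
    · have : ((-1 : ℝ)) ^ k = 1 := h.neg_one_pow
      simp [hθdef, this]
    · have : ((-1 : ℝ)) ^ (k + 1) = 1 := by
        have : Even (k + 1) := Odd.add_one h
        exact this.neg_one_pow
      simp [hθdef, this]
  have hbpos : ∀ k, 0 < b k := by
    intro k
    rw [hb k]
    split_ifs with h
    · apply Real.sqrt_pos.mpr; positivity
    · apply Real.sqrt_pos.mpr
      have : (0:ℝ) ≤ (k:ℝ) := Nat.cast_nonneg k
      linarith
  have hbne : ∀ k, b k ≠ 0 := fun k => (hbpos k).ne'
  have hbsq : ∀ k, (b k) ^ 2 = ((k : ℝ) + 1 + θ (k + 1)) / 2 := by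
    intro k
    rw [hb k]
    rcases Nat.even_or_odd (k + 1) with h | h
    · rw [if_pos h, Real.sq_sqrt (by positivity)]
      have : ((-1 : ℝ)) ^ (k+1) = 1 := h.neg_one_pow
      simp [hθdef, this]
    · rw [if_neg (Nat.not_even_iff_odd.mpr h), Real.sq_sqrt (by
        have : (0:ℝ) ≤ (k:ℝ) := Nat.cast_nonneg k
        linarith)]
      have : ((-1 : ℝ)) ^ (k+1) = -1 := h.neg_one_pow
      simp [hθdef, this]
      ring
  have hrec : ∀ k, C (b (k + 1)) * ψ (k + 2) = X * ψ (k + 1) - C (b k) * ψ k := by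
    intro k
    have := hψ (k + 1) (by omega)
    simpa using this
  have hrecE : ∀ k, ∀ x : ℝ, b (k + 1) * (ψ (k + 2)).eval x
      = x * (ψ (k + 1)).eval x - b k * (ψ k).eval x := by
    intro k x
    have := congrArg (fun p => Polynomial.eval x p) (hrec k)
    simpa using this
  have hderE : ∀ k, ∀ x : ℝ, b (k + 1) * (derivative (ψ (k + 2))).eval x
      = (ψ (k + 1)).eval x + x * (derivative (ψ (k + 1))).eval x
        - b k * (derivative (ψ k)).eval x := by
    intro k x
    have h := congrArg (fun p => Polynomial.eval x (derivative p)) (hrec k)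
    simp only [derivative_mul, derivative_C, derivative_sub, derivative_X, zero_mul,
      one_mul, eval_add, eval_sub, eval_mul, eval_C, eval_X, zero_add] at h
    linarith [h]
  -- the key induction
  have key : ∀ m : ℕ, (∀ x : ℝ,
      b (m + 1) * b m * (x * (derivative (ψ (m + 2))).eval x)
        = ((m : ℝ) + 2) * b m * (x * (ψ (m + 1)).eval x)
          + (((m : ℝ) + 1) * θ (m + 2) / 2) * (ψ m).eval x) ∧ (∀ x : ℝ,
      b (m + 2) * b (m + 1) * (x * (derivative (ψ (m + 3))).eval x)
        = ((m : ℝ) + 3) * b (m + 1) * (x * (ψ (m + 2)).eval x)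
          + (((m : ℝ) + 2) * θ (m + 3) / 2) * (ψ (m + 1)).eval x) := by
    intro m
    induction m with
    | zero =>
      have e1 : ∀ x : ℝ, (ψ 1).eval x = x / b 0 := by intro x; rw [hψ1]; simp; ring
      have d1 : ∀ x : ℝ, (derivative (ψ 1)).eval x = 1 / b 0 := by
        intro x; rw [hψ1]; simp
      have d0 : ∀ x : ℝ, (derivative (ψ 0)).eval x = 0 := by intro x; rw [hψ0]; simp
      have e0 : ∀ x : ℝ, (ψ 0).eval x = 1 := by intro x; rw [hψ0]; simp
      have hθ2 : θ 2 = 0 := by norm_num [hθdef]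
      have hθ3 : θ 3 = γ := by norm_num [hθdef]
      have h0 := hbne 0
      have h1 := hbne 1
      have S0 : b 0 ^ 2 = (1 + γ) / 2 := by
        have := hbsq 0
        have h1' : θ 1 = γ := by norm_num [hθdef]
        rw [h1'] at this; norm_num at this; linarith
      have S1 : b 1 ^ 2 = 1 := by
        have h := hbsq 1
        rw [show (1:ℕ)+1 = 2 from rfl, hθ2] at h
        push_cast at h
        linarith
      constructor
      · intro x
        have H : b 1 * (derivative (ψ 2)).eval x
            = (ψ 1).eval x + x * (derivative (ψ 1)).eval x
              - b 0 * (derivative (ψ 0)).eval x := hderE 0 x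
        rw [e1, d1, d0] at H
        have hg : θ (0 + 2) = 0 := hθ2
        rw [hg, e1, hψ0]
        norm_num
        linear_combination (norm := (field_simp; ring)) (b 0 * x) * H
      · intro x
        have H : b 2 * (derivative (ψ 3)).eval x
            = (ψ 2).eval x + x * (derivative (ψ 2)).eval x
              - b 1 * (derivative (ψ 1)).eval x := hderE 1 x
        have H0 : b 1 * (derivative (ψ 2)).eval x
            = (ψ 1).eval x + x * (derivative (ψ 1)).eval x
              - b 0 * (derivative (ψ 0)).eval x := hderE 0 x
        have R0 : b 1 * (ψ 2).eval x = x * (ψ 1).eval x - b 0 * (ψ 0).eval x := hrecE 0 x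
        rw [d1] at H
        rw [e1, d1, d0] at H0
        rw [e1, e0] at R0
        have hg : θ (0 + 3) = γ := hθ3
        rw [hg, e1]
        norm_num
        linear_combination (norm := (field_simp; ring))
          (b 1 * x) * H + x^2 * H0 + (-2*x) * R0 + (-(x/b 0)) * S1 + (2*x/b 0) * S0
    | succ m ih =>
      constructor
      · intro x
        have h := ih.2 x
        show b (m + 2) * b (m + 1) * (x * (derivative (ψ (m + 3))).eval x)
          = (((m+1 : ℕ) : ℝ) + 2) * b (m + 1) * (x * (ψ (m + 2)).eval x)
            + ((((m+1 : ℕ) : ℝ) + 1) * θ (m + 3) / 2) * (ψ (m + 1)).eval x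
        push_cast
        linear_combination h
      · intro x
        have H1 : b (m+3) * (derivative (ψ (m+4))).eval x
            = (ψ (m+3)).eval x + x * (derivative (ψ (m+3))).eval x
              - b (m+2) * (derivative (ψ (m+2))).eval x := hderE (m+2) x
        have H2 := ih.2 x
        have H3 := ih.1 x
        have H4 : b (m+2) * (ψ (m+3)).eval x
            = x * (ψ (m+2)).eval x - b (m+1) * (ψ (m+1)).eval x := hrecE (m+1) x
        have H5 := hrecE m x
        have T1 : θ (m+3) = θ (m+1) := hθp (m+1)
        have T2 : θ (m+4) = θ (m+2) := hθp (m+2)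
        have T : θ (m+1) * θ (m+2) = 0 := hθ0 (m+1)
        have S0 : b m ^ 2 = ((m:ℝ) + 1 + θ (m+1)) / 2 := hbsq m
        have S1 : b (m+1) ^ 2 = (((m+1 : ℕ):ℝ) + 1 + θ (m+2)) / 2 := hbsq (m+1)
        have S2 : b (m+2) ^ 2 = (((m+2 : ℕ):ℝ) + 1 + θ (m+3)) / 2 := hbsq (m+2)
        push_cast at S1 S2
        rw [T1] at S2 H2
        show b (m + 3) * b (m + 2) * (x * (derivative (ψ (m + 4))).eval x)
          = (((m+1 : ℕ) : ℝ) + 3) * b (m + 2) * (x * (ψ (m + 3)).eval x)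
            + ((((m+1 : ℕ) : ℝ) + 2) * θ (m + 4) / 2) * (ψ (m + 2)).eval x
        rw [T2]
        push_cast
        apply mul_left_cancel₀ (show b (m+1) * b m ≠ 0 from
          mul_ne_zero (hbne (m+1)) (hbne m))
        linear_combination
          (b (m+2) * b (m+1) * b m * x) * H1
          + (b m * x) * H2
          + (-(b (m+2))^2) * H3
          + (-((m:ℝ)+3) * b (m+1) * b m * x) * H4
          + (-(b m) * (((m:ℝ)+3) * (b (m+1))^2 + ((m:ℝ)+2) * θ (m+1) / 2
              - ((m:ℝ)+2) * (b (m+2))^2)) * H5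
          + (((m:ℝ)+3) * (b (m+1) * b m * (ψ (m+2)).eval x
              + (b m)^2 * (ψ m).eval x)) * S1
          + (-((m:ℝ)+2) * (b (m+1) * b m * (ψ (m+2)).eval x
              + (b m)^2 * (ψ m).eval x) - ((m:ℝ)+1) * θ (m+2) / 2 * (ψ m).eval x) * S2
          + (((m:ℝ)+3) * θ (m+2) / 2 * (ψ m).eval x) * S0
          + ((ψ m).eval x / 2) * T
  -- conclude
  intro n hn x
  obtain ⟨m, rfl⟩ : ∃ m, n = m + 2 := ⟨n - 2, by omega⟩
  have hk := (key m).1 x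
  have h1 := hbne (m + 1)
  have h0 := hbne m
  have hθn : γ * (1 - (-1 : ℝ) ^ (m + 2)) / 2 = θ (m + 2) := rfl
  rw [show m + 2 - 1 = m + 1 from rfl, show m + 2 - 2 = m from rfl, hθn]
  push_cast
  linear_combination (norm := (field_simp; ring)) hk / (b (m+1) * b m)
end

section
/- Let γ > −1 and let ψ_n be the generalized Hermite polynomials (with normalization α = 1). Then for every n ≥ 1 and all real x: x ψ_n'(x) = 2 b_{n-1} x ψ_{n-1}(x) − θ_n ψ_n(x), where θ_n = γ(1−(−1)^n)/2. -/
open Polynomial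

theorem stmt_14 (γ : ℝ) (hγ : -1 < γ) (b : ℕ → ℝ)
    (hb : ∀ n : ℕ, b n = if Even (n + 1) then Real.sqrt (((n : ℝ) + 1) / 2)
                         else Real.sqrt (((n : ℝ) + 1 + γ) / 2))
    (ψ : ℕ → Polynomial ℝ) (hψ0 : ψ 0 = 1) (hψ1 : ψ 1 = C (1 / b 0) * X)
    (hψ : ∀ n : ℕ, 1 ≤ n →
      C (b n) * ψ (n + 1) = X * ψ n - C (b (n - 1)) * ψ (n - 1)) :
    ∀ n : ℕ, 1 ≤ n → ∀ x : ℝ,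
      x * (derivative (ψ n)).eval x =
        2 * b (n - 1) * x * (ψ (n - 1)).eval x
          - (γ * (1 - (-1 : ℝ) ^ n) / 2) * (ψ n).eval x := by
  set θ : ℕ → ℝ := fun n => γ * (1 - (-1 : ℝ) ^ n) / 2 with hθdef
  have hθ2 : ∀ n, θ (n + 2) = θ n := by
    intro n; simp only [hθdef]
    rw [pow_add]; ring
  have hbpos : ∀ n, 0 < b n := by
    intro n
    rw [hb n]
    split_ifs with h
    · exact Real.sqrt_pos.2 (by positivity)
    · apply Real.sqrt_pos.2
      have : (0:ℝ) ≤ n := Nat.cast_nonneg n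
      nlinarith
  have hbne : ∀ n, b n ≠ 0 := fun n => (hbpos n).ne'
  have hbsq : ∀ n, 2 * (b n) ^ 2 = ((n : ℝ) + 1) + θ (n + 1) := by
    intro n
    rw [hb n]
    split_ifs with h
    · rw [Real.sq_sqrt (by positivity)]
      have h1 : (-1 : ℝ) ^ (n + 1) = 1 := h.neg_one_pow
      simp only [hθdef, h1]
      ring
    · rw [Real.sq_sqrt (by nlinarith [Nat.cast_nonneg (α := ℝ) n])]
      rw [Nat.not_even_iff] at h
      have h1 : (-1 : ℝ) ^ (n + 1) = -1 :=
        (Nat.odd_iff.2 h).neg_one_pow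
      simp only [hθdef, h1]
      ring
  have key : ∀ n : ℕ, 1 ≤ n →
      X * derivative (ψ n) = C (2 * b (n - 1)) * (X * ψ (n - 1)) - C (θ n) * ψ n := by
    intro n
    induction n using Nat.strong_induction_on with
    | _ n IH =>
      rcases n with _ | _ | m
      · intro h; exact absurd h (by omega)
      · intro _
        have hθ1 : θ 1 = γ := by simp only [hθdef]; norm_num
        have hb0 : 2 * (b 0) ^ 2 = 1 + γ := by
          have h := hbsq 0; rw [hθ1] at h; simpa using h
        rw [hψ1]
        simp only [Nat.sub_self, hθ1, hψ0]
        rw [derivative_C_mul, derivative_X]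
        have hcoef : (1 / b 0 : ℝ) = 2 * b 0 - γ * (1 / b 0) := by
          field_simp [hbne 0]
          nlinarith
        have hc : (C (1 / b 0) : ℝ[X]) = C (2 * b 0) - C γ * C (1 / b 0) := by
          rw [← map_mul, ← map_sub]
          exact congrArg C hcoef
        linear_combination X * hc
      · intro _
        have E1 : C (b (m + 1)) * ψ (m + 2) = X * ψ (m + 1) - C (b m) * ψ m := by
          have h := hψ (m + 1) (by omega)
          simpa using h
        have E2 : C (b (m + 1)) * derivative (ψ (m + 2)) =
            ψ (m + 1) + X * derivative (ψ (m + 1)) - C (b m) * derivative (ψ m) := by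
          have h := congrArg derivative E1
          simpa [derivative_mul] using h
        have IH1 : X * derivative (ψ (m + 1)) =
            C (2 * b m) * (X * ψ m) - C (θ (m + 1)) * ψ (m + 1) := by
          have h := IH (m + 1) (by omega) (by omega)
          simpa using h
        have hC2' : (C (2 * b m) : ℝ[X]) = 2 * C (b m) := by
          rw [map_mul, map_ofNat]
        have E3 : X * derivative (ψ m) =
            2 * (X * (X * ψ m - C (b m) * ψ (m + 1))) - C (θ m) * ψ m := by
          match m with
          | 0 =>
            have hcb : C (b 0) * ψ 1 = X := by
              rw [hψ1, ← mul_assoc, ← C_mul, mul_one_div, div_self (hbne 0)]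
              simp
            have hθ0 : θ 0 = 0 := by simp [hθdef]
            rw [hψ0, hθ0, hcb]
            simp
          | (k + 1) =>
            have IH0 : X * derivative (ψ (k + 1)) =
                C (2 * b k) * (X * ψ k) - C (θ (k + 1)) * ψ (k + 1) := by
              have h := IH (k + 1) (by omega) (by omega)
              simpa using h
            have rec1 : C (b (k + 1)) * ψ (k + 2) = X * ψ (k + 1) - C (b k) * ψ k := by
              have h := hψ (k + 1) (by omega)
              simpa using h
            have hC2k : (C (2 * b k) : ℝ[X]) = 2 * C (b k) := by
              rw [map_mul, map_ofNat]
            linear_combination IH0 + 2 * X * rec1 + X * ψ k * hC2k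
        have hC2 : (C (2 * b (m + 1)) : ℝ[X]) = 2 * C (b (m + 1)) := by
          rw [map_mul, map_ofNat]
        have hsq0 : (2 : ℝ[X]) * C (b m) ^ 2 = C (m : ℝ) + 1 + C (θ (m + 1)) := by
          have h := congrArg C (hbsq m)
          simpa [map_mul, map_add, map_pow, map_one, map_ofNat] using h
        have hsq1 : (2 : ℝ[X]) * C (b (m + 1)) ^ 2 = C (m : ℝ) + 2 + C (θ (m + 2)) := by
          have h := congrArg C (hbsq (m + 1))
          have h2 : ((m + 1 : ℕ) : ℝ) + 1 = (m : ℝ) + 2 := by push_cast; ring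
          rw [h2] at h
          simpa [map_mul, map_add, map_pow, map_one, map_ofNat] using h
        have hθc : (C (θ (m + 2)) : ℝ[X]) = C (θ m) := congrArg C (hθ2 m)
        have hcne : (C (b (m + 1)) : ℝ[X]) ≠ 0 := by
          simpa using hbne (m + 1)
        apply mul_left_cancel₀ hcne
        show C (b (m + 1)) * (X * derivative (ψ (m + 2))) =
          C (b (m + 1)) * (C (2 * b (m + 1)) * (X * ψ (m + 1)) - C (θ (m + 2)) * ψ (m + 2))
        linear_combination (norm := ring_nf)
          X * E2 + X * IH1 - C (b m) * E3 + X ^ 2 * ψ m * hC2' +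
            X * ψ (m + 1) * hsq0 - X * ψ (m + 1) * hsq1 -
            C (b (m + 1)) * X * ψ (m + 1) * hC2 + C (θ (m + 2)) * E1 -
            C (b m) * ψ m * hθc
  intro n hn x
  have h := congrArg (eval x) (key n hn)
  simp only [eval_mul, eval_sub, eval_C, eval_X] at h
  rw [hθdef] at h
  simp only at h
  linear_combination h
end

section
/- Let γ > −1, α > 0, and let ψ_n be the generalized Hermite (Hermite–Chihara) polynomials defined by the three-term recurrence below. Then for every n ≥ 2 and all real x: x ψ_n'(x) − n ψ_n(x) = 2α b_{n-1} b_{n-2} ψ_{n-2}(x). (In operator form: X d/dx − N = c₁^{-1}(a⁻)², where c₁ = 1/α and a⁻ is the annihilation operator of the associated oscillator algebra.) -/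
open Polynomial

theorem stmt_15 (γ α : ℝ) (hγ : -1 < γ) (hα : 0 < α) (b : ℕ → ℝ)
    (hb : ∀ n : ℕ, b n = if Even (n + 1) then Real.sqrt (((n : ℝ) + 1) / (2 * α))
                         else Real.sqrt (((n : ℝ) + 1 + γ) / (2 * α)))
    (ψ : ℕ → Polynomial ℝ) (hψ0 : ψ 0 = 1) (hψ1 : ψ 1 = C (1 / b 0) * X)
    (hψ : ∀ n : ℕ, 1 ≤ n →
      C (b n) * ψ (n + 1) = X * ψ n - C (b (n - 1)) * ψ (n - 1)) :
    ∀ n : ℕ, 2 ≤ n → ∀ x : ℝ,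
      x * (derivative (ψ n)).eval x - (n : ℝ) * (ψ n).eval x =
        2 * α * b (n - 1) * b (n - 2) * (ψ (n - 2)).eval x := by
  have hbpos : ∀ m : ℕ, 0 < b m := by
    intro m
    rw [hb m]
    have h1 : (0:ℝ) < (m:ℝ) + 1 := by positivity
    have h2 : (0:ℝ) < (m:ℝ) + 1 + γ := by
      have : (0:ℝ) ≤ (m:ℝ) := Nat.cast_nonneg m
      linarith
    split <;> exact Real.sqrt_pos.mpr (by positivity)
  have hsq : ∀ m : ℕ, 2 * α * (b (m + 2))^2 = 2 * α * (b m)^2 + 2 := by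
    intro m
    have hm : (0:ℝ) ≤ (m:ℝ) := Nat.cast_nonneg m
    rw [hb (m + 2), hb m]
    have hpar : Even (m + 2 + 1) ↔ Even (m + 1) := by
      simp [Nat.even_add_one, parity_simps]
    have e1 : (((m + 2 : ℕ)):ℝ) + 1 = (m:ℝ) + 3 := by push_cast; ring
    by_cases hE : Even (m + 1)
    · rw [if_pos (hpar.mpr hE), if_pos hE, e1,
        Real.sq_sqrt (by positivity), Real.sq_sqrt (by positivity)]
      field_simp
      ring
    · rw [if_neg (fun h => hE (hpar.mp h)), if_neg hE, e1,
        Real.sq_sqrt (div_nonneg (by linarith) (by positivity)),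
        Real.sq_sqrt (div_nonneg (by linarith) (by positivity))]
      field_simp
      ring
  have h1sq : 2 * α * (b 1)^2 = 2 := by
    rw [hb 1, if_pos (by norm_num : Even (1 + 1)), Real.sq_sqrt (by positivity)]
    push_cast
    field_simp
    norm_num
  have hrec : ∀ m : ℕ, C (b (m+1)) * ψ (m+2) = X * ψ (m+1) - C (b m) * ψ m := by
    intro m
    simpa using hψ (m+1) (Nat.le_add_left 1 m)
  have hV : ∀ m : ℕ, ∀ x : ℝ, b (m+1) * (ψ (m+2)).eval x
      = x * (ψ (m+1)).eval x - b m * (ψ m).eval x := by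
    intro m x
    have := congrArg (eval x) (hrec m)
    simpa using this
  have hD : ∀ m : ℕ, ∀ x : ℝ, b (m+1) * (derivative (ψ (m+2))).eval x
      = (ψ (m+1)).eval x + x * (derivative (ψ (m+1))).eval x
        - b m * (derivative (ψ m)).eval x := by
    intro m x
    have := congrArg (fun p => (derivative p).eval x) (hrec m)
    simp only [derivative_mul, derivative_C, derivative_sub, derivative_X, zero_mul,
      one_mul, eval_add, eval_sub, eval_mul, eval_C, eval_X, eval_zero, zero_add] at this
    linarith [this]
  have key : ∀ k : ℕ, ∀ x : ℝ,
      x * (derivative (ψ (k+2))).eval x - ((k:ℝ)+2) * (ψ (k+2)).eval x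
        = 2 * α * b (k+1) * b k * (ψ k).eval x := by
    intro k
    induction k using Nat.twoStepInduction with
    | zero =>
      intro x
      have hd := hD 0 x
      have hv := hV 0 x
      simp only [hψ0, hψ1, derivative_one, derivative_mul, derivative_C, derivative_X,
        eval_one, eval_mul, eval_C, eval_X, zero_mul, mul_one, eval_zero, mul_zero,
        sub_zero, add_zero, zero_add, one_mul] at hd hv ⊢
      apply mul_left_cancel₀ (hbpos 1).ne'
      linear_combination x * hd - 2 * hv - b 0 * h1sq
    | one =>
      intro x
      have hd := hD 1 x
      have hv := hV 1 x
      have hd0 := hD 0 x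
      have hv0 := hV 0 x
      have hu : b 0 * (1 / b 0) = 1 := by
        rw [one_div, mul_inv_cancel₀ (hbpos 0).ne']
      simp only [hψ0, hψ1, derivative_one, derivative_mul, derivative_C, derivative_X,
        eval_one, eval_mul, eval_C, eval_X, zero_mul, mul_one, eval_zero, mul_zero,
        sub_zero, add_zero, zero_add, one_mul] at hd hv hd0 hv0 ⊢
      -- P0 at x:
      have p0 : x * (derivative (ψ 2)).eval x - 2 * (ψ 2).eval x = 2 * α * b 1 * b 0 := by
        apply mul_left_cancel₀ (hbpos 1).ne'
        linear_combination x * hd0 - 2 * hv0 - b 0 * h1sq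
      apply mul_left_cancel₀ (hbpos 2).ne'
      have hsq0 := hsq 0
      linear_combination x * hd - 3 * hv + x * p0 - (b 1 * (1/b 0) * x) * hsq0
        - (2 * α * b 1 * b 0 * x) * hu
    | more n ih0 ih1 =>
      intro x
      have hd3 := hD (n+2) x
      have hv3 := hV (n+2) x
      have hv1 := hV n x
      have hsq1 := hsq (n+1)
      have I0 := ih0 x
      have I1 := ih1 x
      apply mul_left_cancel₀ (hbpos (n+3)).ne'
      push_cast at I0 I1 ⊢
      linear_combination x * hd3 - ((n:ℝ)+4) * hv3 + x * I1 - b (n+2) * I0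
        - (2 * α * b (n+2) * b (n+1)) * hv1 - (b (n+2) * (ψ (n+2)).eval x) * hsq1
  intro n hn x
  obtain ⟨k, rfl⟩ : ∃ k, n = k + 2 := ⟨n - 2, by omega⟩
  have h1 : k + 2 - 1 = k + 1 := by omega
  have h2 : k + 2 - 2 = k := by omega
  rw [h1, h2]
  have := key k x
  push_cast at this ⊢
  linarith [this]
end

section
/- Let (v_n)_{n≥0} satisfy 1 = v_0 ≤ v_1 ≤ v_2 ≤ ⋯ and the compatibility condition (with v_{-1} = 0): v_{n-2} v_{2p-1} + v_{2p-3} v_{n-2p} = v_n v_{2p-3} + v_{2p-1} v_{n-2p} for all n ≥ 2 and p ≥ 1 with 2p ≤ n. Let b_0 > 0, b_{n-1} = b_0 √(v_{n-1}(v_n − v_{n-2})/v_1) for n ≥ 2, and ψ_n the polynomials from the three-term recurrence; let B̄₁ p(x) = Σ_{k≥2} ε_k x^k p^{(k)}(x) with (ε_k) determined by v. Suppose there exist real sequences (δ_n)_{n≥2}, (β_n)_{n≥3} with B̄₁ ψ_2 = δ_2 x ψ_1 and B̄₁ ψ_n = δ_n x ψ_{n-1} + β_n ψ_{n-2} for all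 n ≥ 3. Then δ_n b_{n-1} = v_{n-1} − n for every n ≥ 2, and β_n = 0 for every even n ≥ 4. -/
open Polynomial Finset

/-- The operator `B̄₁ p (x) = ∑_{k ≥ 2} ε_k x^k p^{(k)}(x)`
(a finite sum on each polynomial). -/
noncomputable def B1bar (ε : ℕ → ℝ) (p : Polynomial ℝ) : Polynomial ℝ :=
  ∑ k ∈ Finset.Icc 2 p.natDegree, C (ε k) * X ^ k * derivative^[k] p

theorem stmt_16 (v : ℕ → ℝ) (hv0 : v 0 = 1) (hmono : ∀ n : ℕ, v n ≤ v (n + 1))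
    (hcompat : ∀ n p : ℤ, 2 ≤ n → 1 ≤ p → 2 * p ≤ n →
      vext v (n - 2) * vext v (2 * p - 1) + vext v (2 * p - 3) * vext v (n - 2 * p) =
        vext v n * vext v (2 * p - 3) + vext v (2 * p - 1) * vext v (n - 2 * p))
    (ε : ℕ → ℝ) (hε1 : ε 1 = 1)
    (hεk : ∀ k : ℕ, 2 ≤ k →
      ε k = v (k - 1) / (Nat.factorial k : ℝ)
        - ∑ j ∈ Finset.Icc 1 (k - 1), ε j / (Nat.factorial (k - j) : ℝ))
    (b : ℕ → ℝ) (hb0 : 0 < b 0)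
    (hbn : ∀ n : ℕ, 2 ≤ n →
      b (n - 1) = b 0 * Real.sqrt (v (n - 1) * (v n - v (n - 2)) / v 1))
    (ψ : ℕ → Polynomial ℝ) (hψ0 : ψ 0 = 1) (hψ1 : ψ 1 = C (1 / b 0) * X)
    (hψ : ∀ n : ℕ, 1 ≤ n →
      C (b n) * ψ (n + 1) = X * ψ n - C (b (n - 1)) * ψ (n - 1))
    (δ β : ℕ → ℝ)
    (hδ2 : B1bar ε (ψ 2) = C (δ 2) * X * ψ 1)
    (hδβ : ∀ n : ℕ, 3 ≤ n →
      B1bar ε (ψ n) = C (δ n) * X * ψ (n - 1) + C (β n) * ψ (n - 2)) :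
    (∀ n : ℕ, 2 ≤ n → δ n * b (n - 1) = v (n - 1) - (n : ℝ)) ∧
    (∀ n : ℕ, 4 ≤ n → Even n → β n = 0) := by
  -- Basic structural facts about ψ and b, by induction.
  have aux : ∀ n : ℕ, ((ψ n).natDegree ≤ n ∧ (ψ n).coeff n ≠ 0) ∧
      ((ψ (n+1)).natDegree ≤ n+1 ∧ (ψ (n+1)).coeff (n+1) ≠ 0) ∧ b n ≠ 0 := by
    intro n
    induction n with
    | zero =>
      refine ⟨⟨?_, ?_⟩, ⟨?_, ?_⟩, ne_of_gt hb0⟩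
      · simp [hψ0]
      · simp [hψ0]
      · rw [hψ1]
        exact (natDegree_C_mul_le _ _).trans (by simp)
      · rw [hψ1]
        simp [ne_of_gt hb0]
    | succ n ih =>
      obtain ⟨h0, h1, hbn0⟩ := ih
      have hrec := hψ (n+1) (by omega)
      simp only [Nat.add_sub_cancel] at hrec
      -- coefficient of degree n+2
      have hc := congrArg (fun q => Polynomial.coeff q (n+2)) hrec
      simp only [coeff_C_mul, coeff_sub] at hc
      have hx : (X * ψ (n+1)).coeff (n+2) = (ψ (n+1)).coeff (n+1) := coeff_X_mul _ _
      have hz : (ψ n).coeff (n+2) = 0 :=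
        coeff_eq_zero_of_natDegree_lt (lt_of_le_of_lt h0.1 (by omega))
      rw [hx, hz, mul_zero, sub_zero] at hc
      have hbne : b (n+1) ≠ 0 := by
        intro hb
        rw [hb, zero_mul] at hc
        exact h1.2 hc.symm
      have hcne : (ψ (n+2)).coeff (n+2) ≠ 0 := by
        intro hcz
        rw [hcz, mul_zero] at hc
        exact h1.2 hc.symm
      have hdle : (ψ (n+2)).natDegree ≤ n+2 := by
        have hnd : (C (b (n+1)) * ψ (n+2)).natDegree = (ψ (n+2)).natDegree :=
          natDegree_C_mul hbne
        rw [hrec] at hnd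
        rw [← hnd]
        refine (natDegree_sub_le _ _).trans ?_
        refine max_le ?_ ?_
        · exact (natDegree_mul_le).trans (by have := add_le_add (natDegree_X_le (R := ℝ)) h1.1; omega)
        · exact (natDegree_C_mul_le _ _).trans (le_trans h0.1 (by omega))
      exact ⟨h1, ⟨hdle, hcne⟩, hbne⟩
  have hbne : ∀ n, b n ≠ 0 := fun n => (aux n).2.2
  have hdeg : ∀ n, (ψ n).natDegree = n := fun n =>
    le_antisymm (aux n).1.1 (le_natDegree_of_ne_zero (aux n).1.2)
  have hlc : ∀ n, (ψ n).coeff n ≠ 0 := fun n => (aux n).1.2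
  -- leading coefficient relation
  have hcoeffrel : ∀ n : ℕ, 1 ≤ n → b n * (ψ (n+1)).coeff (n+1) = (ψ n).coeff n := by
    intro n hn
    have hrec := hψ n hn
    have hc := congrArg (fun q => Polynomial.coeff q (n+1)) hrec
    simp only [coeff_C_mul, coeff_sub] at hc
    rw [coeff_X_mul] at hc
    have hz : (ψ (n-1)).coeff (n+1) = 0 :=
      coeff_eq_zero_of_natDegree_lt (by rw [hdeg]; omega)
    rw [hz, mul_zero, sub_zero] at hc
    exact hc
  -- the ε-sum identity
  have hS : ∀ k : ℕ, 2 ≤ k →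
      ∑ j ∈ Icc 2 k, ε j * (Nat.descFactorial k j : ℝ) = v (k-1) - (k : ℝ) := by
    intro k hk
    obtain ⟨m, rfl⟩ : ∃ m, k = m + 2 := ⟨k - 2, by omega⟩
    have hfactne : ((m+2).factorial : ℝ) ≠ 0 := Nat.cast_ne_zero.mpr (Nat.factorial_ne_zero _)
    -- step 1: ∑_{j=1}^{k} ε j / (k-j)! = v (k-1) / k!
    have hstep1 : ∑ j ∈ Icc 1 (m+2), ε j / (Nat.factorial (m+2-j) : ℝ) = v (m+1) / ((m+2).factorial : ℝ) := by
      have hins : Icc 1 (m+2) = insert (m+2) (Icc 1 (m+1)) := by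
        ext x; simp only [mem_Icc, mem_insert]; omega
      rw [hins, Finset.sum_insert (by simp)]
      have h2 := hεk (m+2) (by omega)
      rw [h2]
      simp
    -- step 2: multiply by k!
    have hstep2 : ∑ j ∈ Icc 1 (m+2), ε j * (Nat.descFactorial (m+2) j : ℝ) = v (m+1) := by
      have : ∀ j ∈ Icc 1 (m+2), ε j * (Nat.descFactorial (m+2) j : ℝ)
          = (ε j / (Nat.factorial (m+2-j) : ℝ)) * ((m+2).factorial : ℝ) := by
        intro j hj
        simp only [mem_Icc] at hj
        have hd : ((Nat.factorial (m+2-j) : ℕ) : ℝ) * (Nat.descFactorial (m+2) j : ℝ)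
            = ((m+2).factorial : ℝ) := by
          exact_mod_cast congrArg (fun x : ℕ => (x : ℝ)) (Nat.factorial_mul_descFactorial hj.2)
        have hfne : ((Nat.factorial (m+2-j) : ℕ) : ℝ) ≠ 0 := Nat.cast_ne_zero.mpr (Nat.factorial_ne_zero _)
        field_simp
        linear_combination ε j * hd
      rw [Finset.sum_congr rfl this, ← Finset.sum_mul, hstep1]
      field_simp
    -- step 3: remove the j = 1 term
    have hins1 : Icc 1 (m+2) = insert 1 (Icc 2 (m+2)) := by
      ext x; simp only [mem_Icc, mem_insert]; omega
    rw [hins1, Finset.sum_insert (by simp)] at hstep2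
    rw [hε1, Nat.descFactorial_one] at hstep2
    push_cast at hstep2 ⊢
    linarith
  -- coefficient of degree n of B1bar applied to ψ n
  have hB1top : ∀ n : ℕ, (B1bar ε (ψ n)).coeff n
      = (∑ k ∈ Icc 2 n, ε k * (Nat.descFactorial n k : ℝ)) * (ψ n).coeff n := by
    intro n
    unfold B1bar
    rw [hdeg, finset_sum_coeff, Finset.sum_mul]
    refine Finset.sum_congr rfl ?_
    intro k hk
    simp only [mem_Icc] at hk
    rw [mul_assoc, coeff_C_mul]
    have h1 : (X ^ k * derivative^[k] (ψ n)).coeff n = (derivative^[k] (ψ n)).coeff (n - k) := by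
      rw [coeff_X_pow_mul', if_pos hk.2]
    rw [h1, Polynomial.coeff_iterate_derivative]
    have h2 : n - k + k = n := by omega
    simp only [h2, nsmul_eq_mul]
    push_cast
    ring
  -- constant coefficient of B1bar is zero
  have hB1zero : ∀ p : Polynomial ℝ, (B1bar ε p).coeff 0 = 0 := by
    intro p
    unfold B1bar
    rw [finset_sum_coeff]
    refine Finset.sum_eq_zero ?_
    intro k hk
    simp only [mem_Icc] at hk
    rw [mul_assoc, coeff_C_mul, mul_coeff_zero, coeff_X_pow]
    have : ¬ (0 = k) := by omega
    simp [this]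
  -- constant coefficients of even-index ψ are nonzero
  have hconst : ∀ k : ℕ, (ψ (2*k)).coeff 0 ≠ 0 := by
    intro k
    induction k with
    | zero => simp [hψ0]
    | succ k ih =>
      have hrec := hψ (2*k+1) (by omega)
      simp only [Nat.add_sub_cancel] at hrec
      have hc := congrArg (fun q => Polynomial.coeff q 0) hrec
      simp only [coeff_C_mul, coeff_sub, mul_coeff_zero, coeff_X_zero, coeff_C_zero,
        zero_mul, zero_sub] at hc
      have h2 : 2*(k+1) = 2*k+1+1 := by ring
      rw [h2]
      intro hz
      rw [hz, mul_zero] at hc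
      have hz2 : b (2*k) * (ψ (2*k)).coeff 0 = 0 := neg_eq_zero.mp hc.symm
      exact mul_ne_zero (hbne (2*k)) ih hz2
  constructor
  · -- Part 1
    intro n hn
    have hrel := hcoeffrel (n-1) (by omega)
    have hn1 : n - 1 + 1 = n := by omega
    rw [hn1] at hrel
    have hSn := hS n hn
    rcases eq_or_lt_of_le hn with heq | hlt
    · -- n = 2
      subst heq
      have hc : (B1bar ε (ψ 2)).coeff 2 = (C (δ 2) * X * ψ 1).coeff 2 := by rw [hδ2]
      rw [hB1top 2, hS 2 le_rfl] at hc
      simp only [mul_assoc, coeff_C_mul] at hc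
      have hx : (X * ψ 1).coeff 2 = (ψ 1).coeff 1 := coeff_X_mul _ _
      rw [hx] at hc
      norm_num at hrel hc ⊢
      have key : (δ 2 * b 1 - (v 1 - 2)) * (ψ 2).coeff 2 = 0 := by
        linear_combination δ 2 * hrel - hc
      have h0 := (mul_eq_zero.mp key).resolve_right (hlc 2)
      linarith
    · -- n ≥ 3
      have hn3 : 3 ≤ n := hlt
      have hc : (B1bar ε (ψ n)).coeff n
          = (C (δ n) * X * ψ (n - 1) + C (β n) * ψ (n - 2)).coeff n := by rw [hδβ n hn3]
      rw [hB1top n, hSn] at hc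
      simp only [coeff_add, mul_assoc, coeff_C_mul] at hc
      have hx : (X * ψ (n-1)).coeff n = (ψ (n-1)).coeff (n-1) := by
        have hxx := coeff_X_mul (ψ (n-1)) (n-1)
        rwa [hn1] at hxx
      have hz : (ψ (n-2)).coeff n = 0 :=
        coeff_eq_zero_of_natDegree_lt (by rw [hdeg]; omega)
      rw [hx, hz, mul_zero, add_zero] at hc
      have key : (δ n * b (n-1) - (v (n-1) - n)) * (ψ n).coeff n = 0 := by
        linear_combination δ n * hrel - hc
      have h0 := (mul_eq_zero.mp key).resolve_right (hlc n)
      linarith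
  · -- Part 2
    intro n hn heven
    have hc : (0:ℝ) = (C (δ n) * X * ψ (n - 1) + C (β n) * ψ (n - 2)).coeff 0 := by
      rw [← hδβ n (by omega), hB1zero]
    simp only [coeff_add, mul_assoc, coeff_C_mul, mul_coeff_zero, coeff_X_zero, coeff_C_zero,
      zero_mul, mul_zero, zero_add] at hc
    obtain ⟨r, hr⟩ := heven
    have h2 : n - 2 = 2 * (r - 1) := by omega
    rw [h2] at hc
    have := hconst (r-1)
    rcases mul_eq_zero.mp hc.symm with h | h
    · exact h
    · exact absurd h this
end
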